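/- arXiv:1510.00060 — 7 statements merged into one kernel-verified Lean document; each statement's English description precedes it below -/
import Mathlib

section
/- Let H be a complete bipartite graph whose edges are coloured with 2 colours. Then either there is a monochromatic connected component whose vertex set is all of V(H), or there exist two monochromatic connected components R and B of distinct colours such that R and B are each non-trivial (each meets both biparts), R ∪ B covers all vertices of H, and the intersection R ∩ B contains one entire bipart of H, or the colouring is split (every monochromatic component meets both biparts and each colour has exactly two components). -/
open SimpleGraph

/-- The simple graph on `α ⊕ β` whose edges are the colour-`c` edges of the
(not necessarily proper) edge-colouring `χ` of the complete bipartite graph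
with biparts `α` and `β`. -/
def colourGraph {α β : Type} {r : ℕ} (χ : α → β → Fin r) (c : Fin r) :
    SimpleGraph (α ⊕ β) where
  Adj x y := ∃ a b, χ a b = c ∧
    ((x = Sum.inl a ∧ y = Sum.inr b) ∨ (x = Sum.inr b ∧ y = Sum.inl a))
  symm := by
    constructor
    rintro x y ⟨a, b, hc, h | h⟩
    · exact ⟨a, b, hc, Or.inr ⟨h.2, h.1⟩⟩
    · exact ⟨a, b, hc, Or.inl ⟨h.2, h.1⟩⟩
  loopless := by
    constructor
    rintro x ⟨a, b, hc, ⟨h1, h2⟩ | ⟨h1, h2⟩⟩ <;> simp_all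

/-- A monochromatic component is non-trivial if it meets both biparts. -/
def Nontriv {α β : Type} {r : ℕ} (χ : α → β → Fin r) (c : Fin r)
    (K : (colourGraph χ c).ConnectedComponent) : Prop :=
  (∃ a : α, Sum.inl a ∈ K.supp) ∧ (∃ b : β, Sum.inr b ∈ K.supp)

/-- A 2-edge-colouring of a complete bipartite graph is split if all
monochromatic components are non-trivial and each colour has exactly two
monochromatic components. -/
def IsSplit {α β : Type} (χ : α → β → Fin 2) : Prop :=
  (∀ (c : Fin 2) (K : (colourGraph χ c).ConnectedComponent), Nontriv χ c K) ∧
  (∀ c : Fin 2, Nat.card ((colourGraph χ c).ConnectedComponent) = 2)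

/-!
Two vertices on opposite sides are joined by an edge, so if they lie in different components
of one colour they are adjacent in the other. Hence, if a component `K` of colour `c` contains
a whole bipart, every vertex outside `K` sends only edges of the other colour `c'` into that
bipart, and one `c'`-component contains the bipart together with everything outside `K`: either
one of `K` and this component spans, or they form the required pair. If no component contains a
whole bipart, every component meets both sides (a vertex missing the opposite side in colour `c`
sees all of it in colour `c'`), and three components of one colour `c` would force a whole bipart
into a single `c'`-component: any vertex `w` misses one of two of them, and through a vertex of
that component on the other side, `w` is `c'`-connected to a fixed vertex of the third.
-/

lemma Sum.exists_isLeft_eq {α β : Type} [Nonempty α] [Nonempty β] (s : Bool) :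
    ∃ x : α ⊕ β, x.isLeft = s := by
  cases s
  · exact ⟨Sum.inr (Classical.arbitrary β), rfl⟩
  · exact ⟨Sum.inl (Classical.arbitrary α), rfl⟩

namespace colourGraph

variable {α β : Type}

lemma exists_adj_of_isLeft_ne {r : ℕ} (χ : α → β → Fin r) {x y : α ⊕ β}
    (h : x.isLeft ≠ y.isLeft) : ∃ c, (colourGraph χ c).Adj x y := by
  cases x with
  | inl a => cases y with
    | inl _ => exact absurd rfl h
    | inr b => exact ⟨χ a b, a, b, rfl, Or.inl ⟨rfl, rfl⟩⟩
  | inr b => cases y with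
    | inl a => exact ⟨χ a b, a, b, rfl, Or.inr ⟨rfl, rfl⟩⟩
    | inr _ => exact absurd rfl h

lemma nontriv_iff {r : ℕ} {χ : α → β → Fin r} {c : Fin r}
    {K : (colourGraph χ c).ConnectedComponent} :
    Nontriv χ c K ↔ ∀ s : Bool, ∃ x ∈ K.supp, x.isLeft = s := by
  constructor
  · rintro ⟨⟨a, ha⟩, ⟨b, hb⟩⟩ (_ | _)
    exacts [⟨_, hb, rfl⟩, ⟨_, ha, rfl⟩]
  · intro h
    obtain ⟨_ | b, hb, hb'⟩ := h false
    · exact absurd hb' (by simp)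
    obtain ⟨a | _, ha, ha'⟩ := h true
    · exact ⟨⟨a, ha⟩, ⟨b, hb⟩⟩
    · exact absurd ha' (by simp)

variable {χ : α → β → Fin 2} {c c' : Fin 2}

lemma adj_of_connectedComponentMk_ne (hc : c ≠ c') {x y : α ⊕ β}
    (hside : x.isLeft ≠ y.isLeft)
    (hne : (colourGraph χ c).connectedComponentMk x ≠ (colourGraph χ c).connectedComponentMk y) :
    (colourGraph χ c').Adj x y := by
  obtain ⟨d, hd⟩ := exists_adj_of_isLeft_ne χ hside
  obtain rfl | rfl : d = c ∨ d = c' := by omega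
  exacts [absurd (ConnectedComponent.sound hd.reachable) hne, hd]

lemma connectedComponentMk_eq_of_common_neighbour (hc : c ≠ c') {u v w : α ⊕ β}
    (hu : u.isLeft ≠ w.isLeft) (hv : w.isLeft ≠ v.isLeft)
    (hwu : (colourGraph χ c).connectedComponentMk u ≠ (colourGraph χ c).connectedComponentMk w)
    (hwv : (colourGraph χ c).connectedComponentMk w ≠ (colourGraph χ c).connectedComponentMk v) :
    (colourGraph χ c').connectedComponentMk u = (colourGraph χ c').connectedComponentMk v :=
  ConnectedComponent.sound ((adj_of_connectedComponentMk_ne hc hu hwu).reachable.trans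
    (adj_of_connectedComponentMk_ne hc hv hwv).reachable)

section BipartInComponent

variable {K : (colourGraph χ c).ConnectedComponent} {s : Bool} {v₀ : α ⊕ β}

lemma isLeft_ne_of_notMem_supp (hK : {x | x.isLeft = s} ⊆ K.supp) {v : α ⊕ β}
    (hv : v ∉ K.supp) : v.isLeft ≠ s :=
  fun h => hv (hK h)

lemma bipart_subset_supp_connectedComponentMk (hc : c ≠ c')
    (hK : {x | x.isLeft = s} ⊆ K.supp) (hv₀ : v₀ ∉ K.supp) :
    {x | x.isLeft = s} ⊆ ((colourGraph χ c').connectedComponentMk v₀).supp := by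
  intro x hx
  have hmk : (colourGraph χ c).connectedComponentMk x ≠
      (colourGraph χ c).connectedComponentMk v₀ := by
    rw [(K.mem_supp_iff x).mp (hK hx)]
    exact fun h => hv₀ ((K.mem_supp_iff v₀).mpr h.symm)
  have hside : x.isLeft ≠ v₀.isLeft :=
    fun h => isLeft_ne_of_notMem_supp hK hv₀ (h.symm.trans hx)
  exact ConnectedComponent.sound (adj_of_connectedComponentMk_ne hc hside hmk).reachable

variable [Nonempty α] [Nonempty β]

lemma supp_union_supp_connectedComponentMk (hc : c ≠ c')
    (hK : {x | x.isLeft = s} ⊆ K.supp) (hv₀ : v₀ ∉ K.supp) :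
    K.supp ∪ ((colourGraph χ c').connectedComponentMk v₀).supp = Set.univ := by
  refine Set.eq_univ_of_forall fun v => or_iff_not_imp_left.mpr fun hv => ?_
  obtain ⟨w, hw⟩ := Sum.exists_isLeft_eq (α := α) (β := β) s
  have hmk : ∀ {u}, u ∉ K.supp →
      (colourGraph χ c).connectedComponentMk u ≠ (colourGraph χ c).connectedComponentMk w := by
    intro u hu h
    exact hu ((K.mem_supp_iff u).mpr (h.trans ((K.mem_supp_iff w).mp (hK hw))))
  refine (ConnectedComponent.mem_supp_iff _ _).mpr
    (connectedComponentMk_eq_of_common_neighbour hc ?_ ?_ (hmk hv) (Ne.symm (hmk hv₀)))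
  · rw [hw]; exact isLeft_ne_of_notMem_supp hK hv
  · rw [hw]; exact (isLeft_ne_of_notMem_supp hK hv₀).symm

lemma supp_eq_univ_or_nontriv_pair (hc : c ≠ c')
    (hK : {x | x.isLeft = s} ⊆ K.supp) (hv₀ : v₀ ∉ K.supp) :
    ((colourGraph χ c').connectedComponentMk v₀).supp = Set.univ ∨
      (Nontriv χ c K ∧ Nontriv χ c' ((colourGraph χ c').connectedComponentMk v₀) ∧
        K.supp ∪ ((colourGraph χ c').connectedComponentMk v₀).supp = Set.univ ∧
        {x | x.isLeft = s} ⊆ K.supp ∩ ((colourGraph χ c').connectedComponentMk v₀).supp) := by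
  have hbipart := bipart_subset_supp_connectedComponentMk hc hK hv₀
  have hcover := supp_union_supp_connectedComponentMk hc hK hv₀
  by_cases hmeets : ∃ x ∈ K.supp, x.isLeft ≠ s
  · obtain ⟨x, hxK, hx⟩ := hmeets
    obtain ⟨w, hw⟩ := Sum.exists_isLeft_eq (α := α) (β := β) s
    have hv₀s := isLeft_ne_of_notMem_supp hK hv₀
    refine Or.inr ⟨nontriv_iff.mpr fun t => ?_, nontriv_iff.mpr fun t => ?_, hcover,
      Set.subset_inter hK hbipart⟩
    all_goals by_cases ht : t = s
    · exact ⟨w, hK hw, hw.trans ht.symm⟩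
    · exact ⟨x, hxK, (Bool.eq_not_of_ne hx).trans (Bool.eq_not_of_ne ht).symm⟩
    · exact ⟨w, hbipart hw, hw.trans ht.symm⟩
    · exact ⟨v₀, rfl, (Bool.eq_not_of_ne hv₀s).trans (Bool.eq_not_of_ne ht).symm⟩
  · push Not at hmeets
    refine Or.inl (Set.eq_univ_of_forall fun x => ?_)
    by_cases hx : x.isLeft = s
    · exact hbipart hx
    · exact (hcover.symm ▸ Set.mem_univ x).resolve_left fun hxK => hx (hmeets x hxK)

end BipartInComponent

section NoBipartInComponent

variable (hP : ∀ (c : Fin 2) (K : (colourGraph χ c).ConnectedComponent) (s : Bool),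
  ¬ {x | x.isLeft = s} ⊆ K.supp)
include hP

lemma nontriv_of_forall_not_bipart_subset (K : (colourGraph χ c).ConnectedComponent) :
    Nontriv χ c K := by
  refine nontriv_iff.mpr fun s => ?_
  obtain ⟨v, rfl⟩ := K.exists_rep
  by_contra hmiss
  push Not at hmiss
  by_cases hv : v.isLeft = s
  · exact hmiss v rfl hv
  obtain ⟨c', hc'⟩ := exists_ne c
  refine hP c' ((colourGraph χ c').connectedComponentMk v) s fun x hx => ?_
  have hmk : (colourGraph χ c).connectedComponentMk v ≠ (colourGraph χ c).connectedComponentMk x :=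
    fun h => hmiss x ((ConnectedComponent.mem_supp_iff _ _).mpr h.symm) hx
  exact ConnectedComponent.sound
    (adj_of_connectedComponentMk_ne hc'.symm (fun h => hv (h.trans hx)) hmk).symm.reachable

lemma not_three_connectedComponents {K₁ K₂ K₃ : (colourGraph χ c).ConnectedComponent}
    (h₁₂ : K₁ ≠ K₂) (h₁₃ : K₁ ≠ K₃) (h₂₃ : K₂ ≠ K₃) : False := by
  obtain ⟨c', hc'⟩ := exists_ne c
  obtain ⟨v₁, hv₁, hv₁s⟩ := nontriv_iff.mp (nontriv_of_forall_not_bipart_subset hP K₁) true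
  refine hP c' ((colourGraph χ c').connectedComponentMk v₁) true fun w hw => ?_
  have through : ∀ K, K ≠ K₁ → (colourGraph χ c).connectedComponentMk w ≠ K →
      w ∈ ((colourGraph χ c').connectedComponentMk v₁).supp := by
    intro K hK₁ hwK
    obtain ⟨u, hu, hus⟩ := nontriv_iff.mp (nontriv_of_forall_not_bipart_subset hP K) false
    rw [ConnectedComponent.mem_supp_iff] at hu hv₁ ⊢
    refine connectedComponentMk_eq_of_common_neighbour hc'.symm (w := u) ?_ ?_ ?_ ?_
    · rw [hw, hus]; decide
    · rw [hus, hv₁s]; decide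
    · rwa [hu]
    · rwa [hu, hv₁]
  by_cases hw₂ : (colourGraph χ c).connectedComponentMk w = K₂
  · exact through K₃ h₁₃.symm (hw₂ ▸ h₂₃)
  · exact through K₂ h₁₂.symm hw₂

lemma card_connectedComponent_eq_two_of_forall_not_bipart_subset [Nonempty α] [Nonempty β]
    (c : Fin 2) : Nat.card (colourGraph χ c).ConnectedComponent = 2 := by
  obtain ⟨v, -⟩ := Sum.exists_isLeft_eq (α := α) (β := β) true
  set K₁ := (colourGraph χ c).connectedComponentMk v
  obtain ⟨w, -, hw⟩ := Set.not_subset.mp (hP c K₁ true)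
  set K₂ := (colourGraph χ c).connectedComponentMk w
  have h₁₂ : K₁ ≠ K₂ := fun h => hw ((K₁.mem_supp_iff w).mpr h.symm)
  refine Nat.card_eq_two_iff.mpr ⟨K₁, K₂, h₁₂, Set.eq_univ_of_forall fun K => ?_⟩
  by_contra hK
  simp only [Set.mem_insert_iff, Set.mem_singleton_iff, not_or] at hK
  exact not_three_connectedComponents hP h₁₂ (Ne.symm hK.1) (Ne.symm hK.2)

end NoBipartInComponent

end colourGraph

open colourGraph in
theorem components_of_two_coloured_complete_bipartite_general
    {α β : Type} [Nonempty α] [Nonempty β]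
    (χ : α → β → Fin 2) :
    (∃ (c : Fin 2) (K : (colourGraph χ c).ConnectedComponent), K.supp = Set.univ) ∨
    (∃ (c₁ c₂ : Fin 2) (K₁ : (colourGraph χ c₁).ConnectedComponent)
        (K₂ : (colourGraph χ c₂).ConnectedComponent), c₁ ≠ c₂ ∧
        Nontriv χ c₁ K₁ ∧ Nontriv χ c₂ K₂ ∧
        K₁.supp ∪ K₂.supp = Set.univ ∧
        ((∀ a : α, Sum.inl a ∈ K₁.supp ∩ K₂.supp) ∨
         (∀ b : β, Sum.inr b ∈ K₁.supp ∩ K₂.supp))) ∨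
    IsSplit χ := by
  by_cases hP : ∃ (c : Fin 2) (K : (colourGraph χ c).ConnectedComponent) (s : Bool),
      {x | x.isLeft = s} ⊆ K.supp
  · obtain ⟨c, K, s, hK⟩ := hP
    by_cases hspan : K.supp = Set.univ
    · exact Or.inl ⟨c, K, hspan⟩
    obtain ⟨v₀, hv₀⟩ := (Set.ne_univ_iff_exists_notMem _).mp hspan
    obtain ⟨c', hc'⟩ := exists_ne c
    rcases supp_eq_univ_or_nontriv_pair hc'.symm hK hv₀ with hspan' | ⟨hK, hK', hcover, hbipart⟩
    · exact Or.inl ⟨c', _, hspan'⟩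
    refine Or.inr (Or.inl ⟨c, c', K, _, hc'.symm, hK, hK', hcover, ?_⟩)
    cases s
    exacts [Or.inr fun b => hbipart rfl, Or.inl fun a => hbipart rfl]
  · push Not at hP
    exact Or.inr (Or.inr ⟨fun c => nontriv_of_forall_not_bipart_subset hP,
      card_connectedComponent_eq_two_of_forall_not_bipart_subset hP⟩)

/-- For any 2-edge-colouring of a complete bipartite graph: either some
monochromatic component is spanning, or there is a V-colouring (two
non-trivial components of distinct colours covering everything whose
intersection contains a whole bipart), or the colouring is split. -/
theorem components_of_two_coloured_complete_bipartite
    {α β : Type} [Fintype α] [Fintype β] [Nonempty α] [Nonempty β]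
    (χ : α → β → Fin 2) :
    (∃ (c : Fin 2) (K : (colourGraph χ c).ConnectedComponent), K.supp = Set.univ) ∨
    (∃ (c₁ c₂ : Fin 2) (K₁ : (colourGraph χ c₁).ConnectedComponent)
        (K₂ : (colourGraph χ c₂).ConnectedComponent), c₁ ≠ c₂ ∧
        Nontriv χ c₁ K₁ ∧ Nontriv χ c₂ K₂ ∧
        K₁.supp ∪ K₂.supp = Set.univ ∧
        ((∀ a : α, Sum.inl a ∈ K₁.supp ∩ K₂.supp) ∨
         (∀ b : β, Sum.inr b ∈ K₁.supp ∩ K₂.supp))) ∨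
    IsSplit χ :=
  components_of_two_coloured_complete_bipartite_general χ
end

section
/- For any 2-edge-colouring of a complete bipartite graph H there exist one or two non-trivial monochromatic components that together cover all vertices of H. -/
open SimpleGraph

/-!
Take an edge `ab`, of colour `c`, and let `K` be its colour-`c` component. Every vertex outside
`K` is joined to `a` or to `b` in the other colour `c + 1`. If some edge between the two sides
of the complement of `K` has colour `c + 1`, then `a` and `b` lie in one `(c + 1)`-component,
which contains the whole complement; if all these edges have colour `c`, the complement is a
complete bipartite graph in colour `c`, hence inside one `c`-component. When the complement
misses a side, the `(c + 1)`-star at `a` or at `b` covers it.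
-/

open Sum

namespace colourGraph

variable {α β : Type} {a : α} {b : β}

section General

variable {r : ℕ} {χ : α → β → Fin r} {c : Fin r} {K : (colourGraph χ c).ConnectedComponent}

theorem adj_inl_inr : (colourGraph χ c).Adj (inl a) (inr b) ↔ χ a b = c := by
  constructor
  · rintro ⟨a', b', h, ⟨ha, hb⟩ | ⟨ha, _⟩⟩
    · cases ha; cases hb; exact h
    · cases ha
  · exact fun h => ⟨a, b, h, Or.inl ⟨rfl, rfl⟩⟩

theorem inl_mem_supp_of_inr_mem (hb : inr b ∈ K.supp) (h : χ a b = c) : inl a ∈ K.supp :=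
  K.mem_supp_of_adj_mem_supp hb (adj_inl_inr.2 h).symm

theorem inr_mem_supp_of_inl_mem (ha : inl a ∈ K.supp) (h : χ a b = c) : inr b ∈ K.supp :=
  K.mem_supp_of_adj_mem_supp ha (adj_inl_inr.2 h)

theorem subset_supp_of_forall_colour_eq {S : Set (α ⊕ β)} {a₀ : α} {b₀ : β}
    (ha₀ : inl a₀ ∈ S) (hb₀ : inr b₀ ∈ S) (hS : ∀ a b, inl a ∈ S → inr b ∈ S → χ a b = c) :
    S ⊆ ((colourGraph χ c).connectedComponentMk (inl a₀)).supp := by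
  have hb₀N : inr b₀ ∈ ((colourGraph χ c).connectedComponentMk (inl a₀)).supp :=
    inr_mem_supp_of_inl_mem rfl (hS a₀ b₀ ha₀ hb₀)
  rintro (a | b) h
  · exact inl_mem_supp_of_inr_mem hb₀N (hS a b₀ h hb₀)
  · exact inr_mem_supp_of_inl_mem rfl (hS a₀ b ha₀ h)

end General

theorem _root_.Fin.eq_add_one_of_ne {x c : Fin 2} (h : x ≠ c) : x = c + 1 := by
  revert x c; decide

section TwoColours

variable {χ : α → β → Fin 2} {c : Fin 2} {K : (colourGraph χ c).ConnectedComponent}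

theorem colour_eq_add_one_of_inl_not_mem (hbK : inr b ∈ K.supp) {a' : α}
    (ha' : inl a' ∉ K.supp) : χ a' b = c + 1 :=
  Fin.eq_add_one_of_ne fun h => ha' (inl_mem_supp_of_inr_mem hbK h)

theorem colour_eq_add_one_of_inr_not_mem (haK : inl a ∈ K.supp) {b' : β}
    (hb' : inr b' ∉ K.supp) : χ a b' = c + 1 :=
  Fin.eq_add_one_of_ne fun h => hb' (inr_mem_supp_of_inl_mem haK h)

theorem exists_nontriv_compl_subset_supp_of_not_mem (haK : inl a ∈ K.supp)
    (hbK : inr b ∈ K.supp) {a₀ : α} {b₀ : β} (ha₀ : inl a₀ ∉ K.supp) (hb₀ : inr b₀ ∉ K.supp) :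
    ∃ (d : Fin 2) (L : (colourGraph χ d).ConnectedComponent),
      Nontriv χ d L ∧ K.suppᶜ ⊆ L.supp := by
  by_cases hmono : ∀ a' b', inl a' ∉ K.supp → inr b' ∉ K.supp → χ a' b' = c
  · have hsub := subset_supp_of_forall_colour_eq (S := K.suppᶜ) ha₀ hb₀ hmono
    exact ⟨c, _, ⟨⟨a₀, rfl⟩, ⟨b₀, hsub hb₀⟩⟩, hsub⟩
  push Not at hmono
  obtain ⟨a₁, b₁, ha₁, hb₁, h₁⟩ := hmono
  set L := (colourGraph χ (c + 1)).connectedComponentMk (inl a)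
  -- the path `a b₁ a₁ b` in colour `c + 1`
  have hbL : inr b ∈ L.supp :=
    inr_mem_supp_of_inl_mem
      (inl_mem_supp_of_inr_mem
        (inr_mem_supp_of_inl_mem rfl (colour_eq_add_one_of_inr_not_mem haK hb₁))
        (Fin.eq_add_one_of_ne h₁))
      (colour_eq_add_one_of_inl_not_mem hbK ha₁)
  refine ⟨c + 1, L, ⟨⟨a, rfl⟩, ⟨b, hbL⟩⟩, ?_⟩
  rintro (a' | b') h
  · exact inl_mem_supp_of_inr_mem hbL (colour_eq_add_one_of_inl_not_mem hbK h)
  · exact inr_mem_supp_of_inl_mem rfl (colour_eq_add_one_of_inr_not_mem haK h)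

theorem exists_nontriv_compl_subset_supp (haK : inl a ∈ K.supp) (hbK : inr b ∈ K.supp) :
    ∃ (d : Fin 2) (L : (colourGraph χ d).ConnectedComponent),
      Nontriv χ d L ∧ K.suppᶜ ⊆ L.supp := by
  by_cases hA : ∃ a₀, inl a₀ ∉ K.supp <;> by_cases hB : ∃ b₀, inr b₀ ∉ K.supp
  · obtain ⟨a₀, ha₀⟩ := hA
    obtain ⟨b₀, hb₀⟩ := hB
    exact exists_nontriv_compl_subset_supp_of_not_mem haK hbK ha₀ hb₀
  · push Not at hB
    obtain ⟨a₀, ha₀⟩ := hA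
    set L := (colourGraph χ (c + 1)).connectedComponentMk (inr b)
    have hL : ∀ a', inl a' ∉ K.supp → inl a' ∈ L.supp := fun a' h =>
      inl_mem_supp_of_inr_mem rfl (colour_eq_add_one_of_inl_not_mem hbK h)
    refine ⟨c + 1, L, ⟨⟨a₀, hL a₀ ha₀⟩, ⟨b, rfl⟩⟩, ?_⟩
    rintro (a' | b') h
    exacts [hL a' h, absurd (hB b') h]
  · push Not at hA
    obtain ⟨b₀, hb₀⟩ := hB
    set L := (colourGraph χ (c + 1)).connectedComponentMk (inl a)
    have hL : ∀ b', inr b' ∉ K.supp → inr b' ∈ L.supp := fun b' h =>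
      inr_mem_supp_of_inl_mem rfl (colour_eq_add_one_of_inr_not_mem haK h)
    refine ⟨c + 1, L, ⟨⟨a, rfl⟩, ⟨b₀, hL b₀ hb₀⟩⟩, ?_⟩
    rintro (a' | b') h
    exacts [absurd (hA a') h, hL b' h]
  · push Not at hA hB
    refine ⟨c, K, ⟨⟨a, haK⟩, ⟨b, hbK⟩⟩, ?_⟩
    rintro (a' | b') h
    exacts [absurd (hA a') h, absurd (hB b') h]

end TwoColours

end colourGraph

theorem one_or_two_nontrivial_components_cover_general
    {α β : Type} [Nonempty α] [Nonempty β]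
    (χ : α → β → Fin 2) :
    ∃ (c₁ c₂ : Fin 2) (K₁ : (colourGraph χ c₁).ConnectedComponent)
      (K₂ : (colourGraph χ c₂).ConnectedComponent),
      Nontriv χ c₁ K₁ ∧ Nontriv χ c₂ K₂ ∧ K₁.supp ∪ K₂.supp = Set.univ := by
  obtain ⟨a⟩ := ‹Nonempty α›
  obtain ⟨b⟩ := ‹Nonempty β›
  set K := (colourGraph χ (χ a b)).connectedComponentMk (inl a)
  have hbK : inr b ∈ K.supp := colourGraph.inr_mem_supp_of_inl_mem rfl rfl
  obtain ⟨d, L, hL, hKL⟩ := colourGraph.exists_nontriv_compl_subset_supp (K := K) rfl hbK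
  exact ⟨_, d, K, L, ⟨⟨a, rfl⟩, ⟨b, hbK⟩⟩, hL, Set.compl_subset_iff_union.1 hKL⟩

/-- For any 2-edge-colouring of a complete bipartite graph there are one or two
non-trivial monochromatic components that together cover all vertices. -/
theorem one_or_two_nontrivial_components_cover
    {α β : Type} [Fintype α] [Fintype β] [Nonempty α] [Nonempty β]
    (χ : α → β → Fin 2) :
    ∃ (c₁ c₂ : Fin 2) (K₁ : (colourGraph χ c₁).ConnectedComponent)
      (K₂ : (colourGraph χ c₂).ConnectedComponent),
      Nontriv χ c₁ K₁ ∧ Nontriv χ c₂ K₂ ∧ K₁.supp ∪ K₂.supp = Set.univ :=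
  one_or_two_nontrivial_components_cover_general χ
end

section
/- Let the edges of a complete bipartite graph H be coloured with three colours (red, green, blue) such that each colour class has at least four non-trivial monochromatic components. Then there exist three monochromatic components whose union contains every vertex of H. -/
/-!
Take four distinct non-trivial components `M i` of colour `2` and anchors `x i ∈ α`, `y i ∈ β`
in `M i`. A vertex is `2`-joined to at most one `M i`, so it meets all but at most one anchor of
the other side in colour `0` or `1`. Counting against the four non-trivial components of colours
`0` and `1` yields, on each side, a `0`-hub and a `1`-hub, joined in their colour to all but at
most one opposite anchor, and every vertex of that side is joined to one of its two hubs in the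
hub's colour. An edge `x i y j` with `i ≠ j` has colour `0` or `1` and can be chosen among anchors
joined to the hubs, so the two `0`-hubs or the two `1`-hubs share a component.
-/

open SimpleGraph

open Finset
open scoped Classical

namespace SimpleGraph

variable {V ι : Type*} {H : SimpleGraph V}

lemma not_reachable_of_mem_supp {K : ι → H.ConnectedComponent} (hK : Function.Injective K)
    {v w : ι → V} (hv : ∀ i, v i ∈ (K i).supp) (hw : ∀ i, w i ∈ (K i).supp) {i j : ι}
    (hij : i ≠ j) : ¬ H.Reachable (v i) (w j) := fun h =>
  hij <| hK <| by
    rw [← ((K i).mem_supp_iff _).1 (hv i), ← ((K j).mem_supp_iff _).1 (hw j)]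
    exact ConnectedComponent.sound h

lemma pairwise_not_reachable_of_forall_exists [Finite ι] {p x : ι → V}
    (hp : Pairwise fun s t => ¬ H.Reachable (p s) (p t))
    (h : ∀ t, ∃ i, H.Reachable (p t) (x i)) :
    Pairwise fun i j => ¬ H.Reachable (x i) (x j) := by
  choose g hg using h
  have hg_inj : g.Injective := fun s t hst =>
    by_contra fun hne => hp hne ((hg s).trans (hst ▸ (hg t).symm))
  intro i j hij hx
  obtain ⟨s, rfl⟩ := Finite.surjective_of_injective hg_inj i
  obtain ⟨t, rfl⟩ := Finite.surjective_of_injective hg_inj j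
  exact hp (fun hst => hij (congrArg g hst)) ((hg s).trans (hx.trans (hg t).symm))

variable [Fintype ι]

lemma card_filter_reachable_le_one {x : ι → V}
    (hx : Pairwise fun i j => ¬ H.Reachable (x i) (x j)) (v : V) :
    #{i | H.Reachable v (x i)} ≤ 1 :=
  card_le_one.2 fun _ hi _ hj =>
    by_contra fun hij => hx hij ((mem_filter.1 hi).2.symm.trans (mem_filter.1 hj).2)

lemma sum_card_filter_reachable_le {τ : Type*} [Fintype τ] {q : τ → V}
    (hq : Pairwise fun s t => ¬ H.Reachable (q s) (q t)) (x : ι → V) :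
    ∑ t, #{i | H.Reachable (q t) (x i)} ≤ Fintype.card ι := by
  rw [← card_biUnion]
  · exact card_le_univ _
  · intro s _ t _ hst
    exact disjoint_filter.2 fun i _ hs ht => hq hst (hs.trans ht.symm)

def IsHub (H : SimpleGraph V) (x : ι → V) (u : V) : Prop :=
  Fintype.card ι ≤ #{i | H.Reachable u (x i)} + 1

lemma IsHub.reachable_of_two_le {x : ι → V} {u v : V} (hu : H.IsHub x u)
    (hv : 2 ≤ #{i | H.Reachable v (x i)}) : H.Reachable v u := by
  by_contra h
  have hdisj :
      Disjoint ({i | H.Reachable v (x i)} : Finset ι) ({i | H.Reachable u (x i)} : Finset ι) :=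
    disjoint_filter.2 fun i _ hvi hui => h (hvi.trans hui.symm)
  have := (card_union_of_disjoint hdisj).symm.trans_le (card_le_univ _)
  unfold IsHub at hu
  omega

lemma IsHub.exists_ne_reachable_reachable {H' : SimpleGraph V} {x : ι → V} {u w : V}
    (hι : 4 ≤ Fintype.card ι) (hu : H.IsHub x u) (hw : H'.IsHub x w) (j : ι) :
    ∃ i ≠ j, H.Reachable u (x i) ∧ H'.Reachable w (x i) := by
  unfold IsHub at hu hw
  set S : Finset ι := {i | H.Reachable u (x i)}
  set T : Finset ι := {i | H'.Reachable w (x i)}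
  have := card_union_add_card_inter S T
  have := card_le_univ (S ∪ T)
  obtain ⟨i, hi, hij⟩ := exists_mem_ne (s := S ∩ T) (by omega) j
  simp only [S, T, mem_inter, mem_filter, mem_univ, true_and] at hi
  exact ⟨i, hij, hi⟩

end SimpleGraph

section ThreeColours

variable {V κ ι : Type*} [Fintype ι] {G : κ → SimpleGraph V} {k c c' : κ}

lemma card_le_card_filter_reachable_add (hcol : ∀ d, d = k ∨ d = c ∨ d = c') {x : ι → V}
    (hx : Pairwise fun i j => ¬ (G k).Reachable (x i) (x j)) {v : V}
    (hv : ∀ i, ∃ d, (G d).Reachable v (x i)) :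
    Fintype.card ι ≤ #{i | (G c).Reachable v (x i)} + #{i | (G c').Reachable v (x i)} + 1 := by
  have hcover : (univ : Finset ι) ⊆ ({i | (G c).Reachable v (x i)} : Finset ι) ∪
      ({i | (G c').Reachable v (x i)} : Finset ι) ∪ ({i | (G k).Reachable v (x i)} : Finset ι) := by
    intro i _
    obtain ⟨d, hd⟩ := hv i
    rcases hcol d with rfl | rfl | rfl <;> simp [hd]
  calc Fintype.card ι = #(univ : Finset ι) := card_univ.symm
    _ ≤ _ := card_le_card hcover
    _ ≤ _ := (card_union_le _ _).trans
      (add_le_add (card_union_le _ _) (card_filter_reachable_le_one hx v))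

/-- If no vertex of `B` were a `c'`-hub, each would meet an anchor in colour `c`, so the `p t`
force the anchors into distinct `c`-components. Then each `q t` reaches two anchors in colour
`c'`, which is too many for four distinct `c'`-components and four anchors. -/
lemma exists_isHub (hcol : ∀ d, d = k ∨ d = c ∨ d = c') {x : Fin 4 → V}
    (hx : Pairwise fun i j => ¬ (G k).Reachable (x i) (x j)) {B : Set V}
    (hB : ∀ v ∈ B, ∀ i, ∃ d, (G d).Reachable v (x i)) {p q : Fin 4 → V} (hpB : ∀ t, p t ∈ B)
    (hp : Pairwise fun s t => ¬ (G c).Reachable (p s) (p t)) (hqB : ∀ t, q t ∈ B)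
    (hq : Pairwise fun s t => ¬ (G c').Reachable (q s) (q t)) :
    ∃ u ∈ B, (G c').IsHub x u := by
  by_contra! hnot
  have hreach : ∀ v ∈ B, ∃ i, (G c).Reachable v (x i) := by
    intro v hv
    have hcard := card_le_card_filter_reachable_add hcol hx (hB v hv)
    have hhub := hnot v hv
    unfold IsHub at hhub
    obtain ⟨i, hi⟩ := card_pos.1 (by omega : 0 < #{i | (G c).Reachable v (x i)})
    exact ⟨i, (mem_filter.1 hi).2⟩
  have hxc := pairwise_not_reachable_of_forall_exists hp fun t => hreach _ (hpB t)
  have htwo : ∀ t, 2 ≤ #{i | (G c').Reachable (q t) (x i)} := fun t => by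
    have hcard := card_le_card_filter_reachable_add hcol hx (hB _ (hqB t))
    have hc := card_filter_reachable_le_one hxc (q t)
    rw [Fintype.card_fin] at hcard
    omega
  have hsum := (sum_le_sum fun t _ => htwo t).trans (sum_card_filter_reachable_le hq x)
  simp at hsum

lemma reachable_hub_or_reachable_hub (hcol : ∀ d, d = k ∨ d = c ∨ d = c') {x : ι → V}
    (hι : 4 ≤ Fintype.card ι) (hx : Pairwise fun i j => ¬ (G k).Reachable (x i) (x j))
    {u w v : V} (hu : (G c).IsHub x u) (hw : (G c').IsHub x w)
    (hv : ∀ i, ∃ d, (G d).Reachable v (x i)) :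
    (G c).Reachable v u ∨ (G c').Reachable v w := by
  have := card_le_card_filter_reachable_add hcol hx hv
  by_cases h : 2 ≤ #{i | (G c).Reachable v (x i)}
  · exact .inl (hu.reachable_of_two_le h)
  · exact .inr (hw.reachable_of_two_le (by omega))

lemma exists_hubs_covering (hcol : ∀ d, d = k ∨ d = c ∨ d = c') {x : Fin 4 → V}
    (hx : Pairwise fun i j => ¬ (G k).Reachable (x i) (x j)) {B : Set V}
    (hB : ∀ v ∈ B, ∀ i, ∃ d, (G d).Reachable v (x i)) {p q : Fin 4 → V} (hpB : ∀ t, p t ∈ B)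
    (hp : Pairwise fun s t => ¬ (G c).Reachable (p s) (p t)) (hqB : ∀ t, q t ∈ B)
    (hq : Pairwise fun s t => ¬ (G c').Reachable (q s) (q t)) :
    ∃ u w, (G c).IsHub x u ∧ (G c').IsHub x w ∧
      ∀ v ∈ B, (G c).Reachable v u ∨ (G c').Reachable v w := by
  obtain ⟨u, -, hu⟩ :=
    exists_isHub (fun d => (hcol d).imp_right Or.symm) hx hB hqB hq hpB hp
  obtain ⟨w, -, hw⟩ := exists_isHub hcol hx hB hpB hp hqB hq
  exact ⟨u, w, hu, hw, fun v hv =>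
    reachable_hub_or_reachable_hub hcol (by simp) hx hu hw (hB v hv)⟩

lemma hubs_reachable_or_hubs_reachable (hcol : ∀ d, d = k ∨ d = c ∨ d = c') {x y : ι → V}
    (hι : 4 ≤ Fintype.card ι) (hxy : ∀ i j, i ≠ j → ¬ (G k).Reachable (x i) (y j))
    (hlink : ∀ i j, ∃ d, (G d).Reachable (x i) (y j)) {u w u' w' : V}
    (hu : (G c).IsHub x u) (hw : (G c').IsHub x w) (hu' : (G c).IsHub y u')
    (hw' : (G c').IsHub y w') :
    (G c).Reachable u u' ∨ (G c').Reachable w w' := by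
  have : Nonempty ι := Fintype.card_pos_iff.1 (by omega)
  obtain ⟨j, -, hju, hjw⟩ := hu'.exists_ne_reachable_reachable hι hw' (Classical.arbitrary ι)
  obtain ⟨i, hij, hiu, hiw⟩ := hu.exists_ne_reachable_reachable hι hw j
  obtain ⟨d, hd⟩ := hlink i j
  rcases hcol d with rfl | rfl | rfl
  · exact absurd hd (hxy i j hij)
  · exact .inl (hiu.trans (hd.trans hju.symm))
  · exact .inr (hiw.trans (hd.trans hjw.symm))

end ThreeColours

section ColourGraph

variable {α β : Type} {r : ℕ} (χ : α → β → Fin r)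

lemma colourGraph_reachable_inl_inr (a : α) (b : β) :
    (colourGraph χ (χ a b)).Reachable (.inl a) (.inr b) :=
  Adj.reachable ⟨a, b, rfl, .inl ⟨rfl, rfl⟩⟩

lemma exists_injective_fin_four {γ : Type*} {P : γ → Prop}
    (h : ∃ K₁ K₂ K₃ K₄ : γ, K₁ ≠ K₂ ∧ K₁ ≠ K₃ ∧ K₁ ≠ K₄ ∧ K₂ ≠ K₃ ∧ K₂ ≠ K₄ ∧ K₃ ≠ K₄ ∧
      P K₁ ∧ P K₂ ∧ P K₃ ∧ P K₄) :
    ∃ K : Fin 4 → γ, K.Injective ∧ ∀ i, P (K i) := by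
  obtain ⟨K₁, K₂, K₃, K₄, h12, h13, h14, h23, h24, h34, p1, p2, p3, p4⟩ := h
  refine ⟨![K₁, K₂, K₃, K₄], fun i j hij => ?_, fun i => ?_⟩
  · fin_cases i <;> fin_cases j <;> simp_all [eq_comm]
  · fin_cases i <;> assumption

lemma exists_anchors {c : Fin r}
    (h : ∃ K : Fin 4 → (colourGraph χ c).ConnectedComponent, K.Injective ∧
      ∀ i, Nontriv χ c (K i)) :
    ∃ (a : Fin 4 → α) (b : Fin 4 → β),
      (∀ i j, i ≠ j → ¬ (colourGraph χ c).Reachable (.inl (a i)) (.inr (b j))) ∧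
      (Pairwise fun i j => ¬ (colourGraph χ c).Reachable (.inl (a i)) (.inl (a j))) ∧
      (Pairwise fun i j => ¬ (colourGraph χ c).Reachable (.inr (b i)) (.inr (b j))) := by
  obtain ⟨K, hK, hnt⟩ := h
  choose a ha using fun i => (hnt i).1
  choose b hb using fun i => (hnt i).2
  exact ⟨a, b, fun _ _ => not_reachable_of_mem_supp hK ha hb,
    fun _ _ => not_reachable_of_mem_supp hK ha ha, fun _ _ => not_reachable_of_mem_supp hK hb hb⟩

lemma exists_supp_union_eq_univ (c₁ c₂ c₃ : Fin r) (z₁ z₂ z₃ : α ⊕ β)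
    (h : ∀ v, (colourGraph χ c₁).Reachable v z₁ ∨ (colourGraph χ c₂).Reachable v z₂ ∨
      (colourGraph χ c₃).Reachable v z₃) :
    ∃ (c₁ c₂ c₃ : Fin r) (K₁ : (colourGraph χ c₁).ConnectedComponent)
      (K₂ : (colourGraph χ c₂).ConnectedComponent)
      (K₃ : (colourGraph χ c₃).ConnectedComponent),
      K₁.supp ∪ K₂.supp ∪ K₃.supp = Set.univ :=
  ⟨c₁, c₂, c₃, (colourGraph χ c₁).connectedComponentMk z₁,
    (colourGraph χ c₂).connectedComponentMk z₂, (colourGraph χ c₃).connectedComponentMk z₃,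
    Set.eq_univ_of_forall fun v => by
      simpa [ConnectedComponent.mem_supp_iff, ConnectedComponent.eq, or_assoc] using h v⟩

end ColourGraph

theorem three_components_cover_of_four_nontrivial_general
    {α β : Type} (χ : α → β → Fin 3)
    (h : ∀ c : Fin 3, ∃ K₁ K₂ K₃ K₄ : (colourGraph χ c).ConnectedComponent,
      K₁ ≠ K₂ ∧ K₁ ≠ K₃ ∧ K₁ ≠ K₄ ∧ K₂ ≠ K₃ ∧ K₂ ≠ K₄ ∧ K₃ ≠ K₄ ∧
      Nontriv χ c K₁ ∧ Nontriv χ c K₂ ∧ Nontriv χ c K₃ ∧ Nontriv χ c K₄) :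
    ∃ (c₁ c₂ c₃ : Fin 3) (K₁ : (colourGraph χ c₁).ConnectedComponent)
      (K₂ : (colourGraph χ c₂).ConnectedComponent)
      (K₃ : (colourGraph χ c₃).ConnectedComponent),
      K₁.supp ∪ K₂.supp ∪ K₃.supp = Set.univ := by
  have hcol : ∀ d : Fin 3, d = 2 ∨ d = 0 ∨ d = 1 := by decide
  obtain ⟨x, y, hxy, hx, hy⟩ := exists_anchors χ (exists_injective_fin_four (h 2))
  obtain ⟨a₀, b₀, -, ha₀, hb₀⟩ := exists_anchors χ (exists_injective_fin_four (h 0))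
  obtain ⟨a₁, b₁, -, ha₁, hb₁⟩ := exists_anchors χ (exists_injective_fin_four (h 1))
  obtain ⟨u, w, hu, hw, hcovβ⟩ := exists_hubs_covering hcol (x := Sum.inl ∘ x) hx
    (B := Set.range Sum.inr) (by rintro _ ⟨b, rfl⟩ i; exact ⟨_, (colourGraph_reachable_inl_inr χ _ b).symm⟩)
    (fun t => ⟨b₀ t, rfl⟩) hb₀ (fun t => ⟨b₁ t, rfl⟩) hb₁
  obtain ⟨u', w', hu', hw', hcovα⟩ := exists_hubs_covering hcol (x := Sum.inr ∘ y) hy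
    (B := Set.range Sum.inl) (by rintro _ ⟨a, rfl⟩ j; exact ⟨_, colourGraph_reachable_inl_inr χ a _⟩)
    (fun t => ⟨a₀ t, rfl⟩) ha₀ (fun t => ⟨a₁ t, rfl⟩) ha₁
  have hcov : ∀ v : α ⊕ β, ((colourGraph χ 0).Reachable v u ∨ (colourGraph χ 1).Reachable v w) ∨
      (colourGraph χ 0).Reachable v u' ∨ (colourGraph χ 1).Reachable v w' := by
    rintro (a | b)
    · exact .inr (hcovα _ ⟨a, rfl⟩)
    · exact .inl (hcovβ _ ⟨b, rfl⟩)
  rcases hubs_reachable_or_hubs_reachable hcol (by simp) hxy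
    (fun i j => ⟨_, colourGraph_reachable_inl_inr χ (x i) (y j)⟩) hu hw hu' hw' with h0 | h1
  · refine exists_supp_union_eq_univ χ 0 1 1 u w w' fun v => ?_
    rcases hcov v with (hv | hv) | hv | hv
    exacts [.inl hv, .inr (.inl hv), .inl (hv.trans h0.symm), .inr (.inr hv)]
  · refine exists_supp_union_eq_univ χ 0 0 1 u u' w fun v => ?_
    rcases hcov v with (hv | hv) | hv | hv
    exacts [.inl hv, .inr (.inr hv), .inr (.inl hv), .inr (.inr (hv.trans h1.symm))]

/-- If every colour of a 3-edge-coloured complete bipartite graph has at least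
four non-trivial monochromatic components, then three monochromatic components
together cover all vertices. -/
theorem three_components_cover_of_four_nontrivial
    {α β : Type} [Fintype α] [Fintype β] (χ : α → β → Fin 3)
    (h : ∀ c : Fin 3, ∃ K₁ K₂ K₃ K₄ : (colourGraph χ c).ConnectedComponent,
      K₁ ≠ K₂ ∧ K₁ ≠ K₃ ∧ K₁ ≠ K₄ ∧ K₂ ≠ K₃ ∧ K₂ ≠ K₄ ∧ K₃ ≠ K₄ ∧
      Nontriv χ c K₁ ∧ Nontriv χ c K₂ ∧ Nontriv χ c K₃ ∧ Nontriv χ c K₄) :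
    ∃ (c₁ c₂ c₃ : Fin 3) (K₁ : (colourGraph χ c₁).ConnectedComponent)
      (K₂ : (colourGraph χ c₂).ConnectedComponent)
      (K₃ : (colourGraph χ c₃).ConnectedComponent),
      K₁.supp ∪ K₂.supp ∪ K₃.supp = Set.univ :=
  three_components_cover_of_four_nontrivial_general χ h
end

section
/- Suppose the edges of a balanced complete bipartite graph H are 3-coloured, V(H) cannot be partitioned into at most five monochromatic connected matchings, and some colour has at most two non-trivial monochromatic components. Then a contradiction follows; equivalently: if H cannot be covered by five disjoint monochromatic connected matchings, then every colour has at least three non-trivial monochromatic components. -/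
open SimpleGraph

/-- A monochromatic connected matching in an `r`-edge-coloured `K_{n,n}`:
a matching all of whose edges have colour `colour` and lie in a single
monochromatic component. A single vertex (field `single`, allowed only when
there are no edges) and the empty graph count as degenerate matchings. -/
structure CMatching (n r : ℕ) (χ : Fin n → Fin n → Fin r) where
  colour : Fin r
  pairs : Finset (Fin n × Fin n)
  mono : ∀ p ∈ pairs, χ p.1 p.2 = colour
  inj1 : ∀ p ∈ pairs, ∀ q ∈ pairs, p.1 = q.1 → p = q
  inj2 : ∀ p ∈ pairs, ∀ q ∈ pairs, p.2 = q.2 → p = q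
  conn : ∀ p ∈ pairs, ∀ q ∈ pairs,
    (colourGraph χ colour).Reachable (Sum.inl p.1) (Sum.inl q.1)
  single : Option (Fin n ⊕ Fin n)
  hsingle : single = none ∨ pairs = ∅

/-- The vertex set covered by a monochromatic connected matching. -/
def CMatching.verts {n r : ℕ} {χ : Fin n → Fin n → Fin r} (M : CMatching n r χ) :
    Set (Fin n ⊕ Fin n) :=
  {x | (∃ p ∈ M.pairs, x = Sum.inl p.1 ∨ x = Sum.inr p.2) ∨ x ∈ M.single}

/-- `V(K_{n,n})` can be partitioned into at most five monochromatic connected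
matchings. -/
def FiveMatchingPartition {n r : ℕ} (χ : Fin n → Fin n → Fin r) : Prop :=
  ∃ M : Fin 5 → CMatching n r χ,
    (∀ i j, i ≠ j → Disjoint (M i).verts (M j).verts) ∧
    (⋃ i, (M i).verts) = Set.univ

/-! Suppose colour `c` has at most two non-trivial components. A maximal `c`-matching then splits
into two connected matchings, and the unmatched vertices span a balanced bipartite graph coloured
with the two other colours `d` and `e` only. There, a connected `d`-matching removed from the
largest `d`-component leaves every `d`-component with at most half of the remaining vertices.
Hall's condition then holds for the `e`-edges. If the left side is `e`-connected, a perfect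
`e`-matching finishes; otherwise there are exactly two `d`-components, which cross each other in
two complete `e`-coloured balanced bipartite graphs, each with a connected perfect matching. -/

open Finset Sum

variable {α β : Type} {r : ℕ}

def IsMatching (P : Finset (α × β)) : Prop :=
  Set.InjOn Prod.fst (P : Set (α × β)) ∧ Set.InjOn Prod.snd (P : Set (α × β))

lemma IsMatching.mono {P Q : Finset (α × β)} (hP : IsMatching P) (hQ : Q ⊆ P) : IsMatching Q :=
  ⟨hP.1.mono (coe_subset.2 hQ), hP.2.mono (coe_subset.2 hQ)⟩

section Matching

variable [DecidableEq α] [DecidableEq β]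

lemma IsMatching.card_sdiff_eq {P : Finset (α × β)} {A : Finset α} {B : Finset β}
    (hP : IsMatching P) (hA : P.image Prod.fst ⊆ A) (hB : P.image Prod.snd ⊆ B)
    (hAB : A.card = B.card) :
    (A \ P.image Prod.fst).card = (B \ P.image Prod.snd).card := by
  rw [card_sdiff_of_subset hA, card_sdiff_of_subset hB, card_image_of_injOn hP.1,
    card_image_of_injOn hP.2, hAB]

lemma exists_maximal_matching (E : Finset (α × β)) :
    ∃ P ⊆ E, IsMatching P ∧ ∀ p ∈ E, p.1 ∈ P.image Prod.fst ∨ p.2 ∈ P.image Prod.snd := by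
  classical
  obtain ⟨P, hPmem, hPmax⟩ := exists_max_image (E.powerset.filter IsMatching) card
    ⟨∅, by simp [IsMatching]⟩
  obtain ⟨hPE, hP⟩ := mem_filter.1 hPmem
  refine ⟨P, mem_powerset.1 hPE, hP, fun p hpE => ?_⟩
  by_contra! hp
  simp only [mem_image, not_exists, not_and] at hp
  have hpP : p ∉ P := fun h => hp.1 p h rfl
  have hins : insert p P ∈ E.powerset.filter IsMatching := by
    refine mem_filter.2 ⟨mem_powerset.2 (insert_subset hpE (mem_powerset.1 hPE)), ?_, ?_⟩
    · rw [coe_insert, Set.injOn_insert hpP]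
      exact ⟨hP.1, fun ⟨q, hq, hqp⟩ => hp.1 q hq hqp⟩
    · rw [coe_insert, Set.injOn_insert hpP]
      exact ⟨hP.2, fun ⟨q, hq, hqp⟩ => hp.2 q hq hqp⟩
  have := hPmax _ hins
  rw [card_insert_of_notMem hpP] at this
  omega

end Matching

structure IsConnMatching (χ : α → β → Fin r) (d : Fin r) (P : Finset (α × β)) : Prop where
  isMatching : IsMatching P
  colour_eq : ∀ p ∈ P, χ p.1 p.2 = d
  reachable : ∀ p ∈ P, ∀ q ∈ P, (colourGraph χ d).Reachable (inl p.1) (inl q.1)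

lemma isConnMatching_empty (χ : α → β → Fin r) (d : Fin r) : IsConnMatching χ d ∅ :=
  ⟨by simp [IsMatching], by simp, by simp⟩

lemma colourGraph_adj_inl_inr {χ : α → β → Fin r} {d : Fin r} {a : α} {b : β} :
    (colourGraph χ d).Adj (inl a) (inr b) ↔ χ a b = d := by
  simp [colourGraph]

inductive MatchingPartitionable [DecidableEq α] [DecidableEq β] (χ : α → β → Fin r) :
    ℕ → Finset α → Finset β → Prop
  | empty (k : ℕ) : MatchingPartitionable χ k ∅ ∅
  | cons {k : ℕ} {d : Fin r} {P : Finset (α × β)} {A : Finset α} {B : Finset β} :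
      IsConnMatching χ d P → Disjoint (P.image Prod.fst) A → Disjoint (P.image Prod.snd) B →
      MatchingPartitionable χ k A B →
      MatchingPartitionable χ (k + 1) (P.image Prod.fst ∪ A) (P.image Prod.snd ∪ B)

lemma MatchingPartitionable.cons_sdiff [DecidableEq α] [DecidableEq β] {χ : α → β → Fin r} {k : ℕ}
    {d : Fin r} {P : Finset (α × β)} {A : Finset α} {B : Finset β} (hP : IsConnMatching χ d P)
    (hA : P.image Prod.fst ⊆ A) (hB : P.image Prod.snd ⊆ B)
    (h : MatchingPartitionable χ k (A \ P.image Prod.fst) (B \ P.image Prod.snd)) :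
    MatchingPartitionable χ (k + 1) A B := by
  simpa only [union_sdiff_of_subset hA, union_sdiff_of_subset hB] using
    h.cons hP disjoint_sdiff disjoint_sdiff

section CMatching

variable {n : ℕ} {χ : Fin n → Fin n → Fin r}

def IsConnMatching.toCMatching {d : Fin r} {P : Finset (Fin n × Fin n)}
    (h : IsConnMatching χ d P) : CMatching n r χ where
  colour := d
  pairs := P
  mono := h.colour_eq
  inj1 _ hp _ hq := h.isMatching.1 hp hq
  inj2 _ hp _ hq := h.isMatching.2 hp hq
  conn := h.reachable
  single := none
  hsingle := Or.inl rfl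

lemma IsConnMatching.verts_toCMatching {d : Fin r} {P : Finset (Fin n × Fin n)}
    (h : IsConnMatching χ d P) :
    h.toCMatching.verts = inl '' ↑(P.image Prod.fst) ∪ inr '' ↑(P.image Prod.snd) := by
  ext v
  simp only [CMatching.verts, toCMatching, Set.mem_ofPred_eq, Option.mem_def, reduceCtorEq,
    or_false, coe_image, Set.mem_union, Set.mem_image, mem_coe]
  constructor
  · rintro ⟨p, hp, rfl | rfl⟩
    exacts [Or.inl ⟨p.1, ⟨p, hp, rfl⟩, rfl⟩, Or.inr ⟨p.2, ⟨p, hp, rfl⟩, rfl⟩]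
  · rintro (⟨_, ⟨p, hp, rfl⟩, rfl⟩ | ⟨_, ⟨p, hp, rfl⟩, rfl⟩)
    exacts [⟨p, hp, Or.inl rfl⟩, ⟨p, hp, Or.inr rfl⟩]

lemma MatchingPartitionable.exists_cMatchings [NeZero r] {k : ℕ} {A B : Finset (Fin n)}
    (h : MatchingPartitionable χ k A B) :
    ∃ M : Fin k → CMatching n r χ, (∀ i j, i ≠ j → Disjoint (M i).verts (M j).verts) ∧
      ⋃ i, (M i).verts = inl '' ↑A ∪ inr '' ↑B := by
  induction h with
  | empty k =>
    refine ⟨fun _ => (isConnMatching_empty χ 0).toCMatching, fun _ _ _ => ?_, ?_⟩ <;>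
      simp [IsConnMatching.verts_toCMatching]
  | @cons k d P A B hP hA hB _ ih =>
    obtain ⟨M, hMdisj, hMunion⟩ := ih
    have hdisj : ∀ j, Disjoint hP.toCMatching.verts (M j).verts := fun j => by
      refine Disjoint.mono_right (hMunion ▸ Set.subset_iUnion _ j) ?_
      rw [hP.verts_toCMatching, Set.disjoint_union_left, Set.disjoint_union_right,
        Set.disjoint_union_right]
      refine ⟨⟨?_, ?_⟩, ?_, ?_⟩
      · exact (Set.disjoint_image_iff inl_injective).2 (disjoint_coe.2 hA)
      · exact Set.disjoint_left.2 (by simp)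
      · exact Set.disjoint_left.2 (by simp)
      · exact (Set.disjoint_image_iff inr_injective).2 (disjoint_coe.2 hB)
    refine ⟨Fin.cons hP.toCMatching M, fun i j hij => ?_, ?_⟩
    · cases i using Fin.cases <;> cases j using Fin.cases
      · exact absurd rfl hij
      · exact hdisj _
      · exact (hdisj _).symm
      · exact hMdisj _ _ fun h => hij (congrArg Fin.succ h)
    · rw [Set.iUnion_fin_add_one_eq_iUnion_succ]
      simp only [Function.comp_def, Fin.cons_zero, Fin.cons_succ, hMunion, hP.verts_toCMatching,
        coe_union, Set.image_union]
      ac_rfl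

lemma fiveMatchingPartition_of_matchingPartitionable [NeZero r]
    (h : MatchingPartitionable χ 5 univ univ) :
    FiveMatchingPartition χ := by
  obtain ⟨M, hdisj, hunion⟩ := h.exists_cMatchings
  refine ⟨M, hdisj, ?_⟩
  rw [hunion, coe_univ, Set.image_univ, Set.image_univ, Set.range_inl_union_range_inr]

end CMatching

section Components

variable {χ : α → β → Fin r} {d : Fin r} {A A' : Finset α} {B B' : Finset β}

def colourGraphOn (χ : α → β → Fin r) (d : Fin r) (A : Finset α) (B : Finset β) :
    SimpleGraph (α ⊕ β) :=
  fromRel fun v w => ∃ a ∈ A, ∃ b ∈ B, χ a b = d ∧ v = inl a ∧ w = inr b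

lemma colourGraphOn_adj_inl_inr {a : α} {b : β} :
    (colourGraphOn χ d A B).Adj (inl a) (inr b) ↔ a ∈ A ∧ b ∈ B ∧ χ a b = d := by
  simp [colourGraphOn]

lemma colourGraphOn_adj_inl {a : α} {w : α ⊕ β} (h : (colourGraphOn χ d A B).Adj (inl a) w) :
    ∃ b ∈ B, χ a b = d := by
  obtain ⟨-, ⟨a', -, b, hb, hab, ha, -⟩ | ⟨-, -, b, -, -, -, ha⟩⟩ := h
  · exact inl_injective ha ▸ ⟨b, hb, hab⟩
  · exact absurd ha inl_ne_inr

lemma colourGraphOn_le : colourGraphOn χ d A B ≤ colourGraph χ d := by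
  rintro v w ⟨-, ⟨a, -, b, -, hab, rfl, rfl⟩ | ⟨a, -, b, -, hab, rfl, rfl⟩⟩
  · exact colourGraph_adj_inl_inr.2 hab
  · exact (colourGraph_adj_inl_inr.2 hab).symm

lemma colourGraphOn_mono (hA : A' ⊆ A) (hB : B' ⊆ B) :
    colourGraphOn χ d A' B' ≤ colourGraphOn χ d A B :=
  fun _ _ ⟨hne, h⟩ => ⟨hne, h.imp (fun ⟨a, ha, b, hb, h⟩ => ⟨a, hA ha, b, hB hb, h⟩)
    (fun ⟨a, ha, b, hb, h⟩ => ⟨a, hA ha, b, hB hb, h⟩)⟩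

open Classical in
noncomputable def compLeft (χ : α → β → Fin r) (d : Fin r) (A : Finset α) (B : Finset β) (x : α) :
    Finset α :=
  A.filter fun a => (colourGraphOn χ d A B).Reachable (inl a) (inl x)

open Classical in
noncomputable def compRight (χ : α → β → Fin r) (d : Fin r) (A : Finset α) (B : Finset β) (x : α) :
    Finset β :=
  B.filter fun b => (colourGraphOn χ d A B).Reachable (inr b) (inl x)

noncomputable def compSize (χ : α → β → Fin r) (d : Fin r) (A : Finset α) (B : Finset β)
    (x : α) : ℕ :=
  (compLeft χ d A B x).card + (compRight χ d A B x).card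

variable {x x' : α}

@[simp] lemma mem_compLeft {a : α} :
    a ∈ compLeft χ d A B x ↔ a ∈ A ∧ (colourGraphOn χ d A B).Reachable (inl a) (inl x) := by
  simp [compLeft]

@[simp] lemma mem_compRight {b : β} :
    b ∈ compRight χ d A B x ↔ b ∈ B ∧ (colourGraphOn χ d A B).Reachable (inr b) (inl x) := by
  simp [compRight]

lemma compLeft_subset : compLeft χ d A B x ⊆ A := fun _ ha => (mem_compLeft.1 ha).1

lemma compRight_subset : compRight χ d A B x ⊆ B := fun _ hb => (mem_compRight.1 hb).1

lemma mem_compLeft_self (hx : x ∈ A) : x ∈ compLeft χ d A B x :=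
  mem_compLeft.2 ⟨hx, Reachable.refl _⟩

lemma compLeft_eq_of_reachable (h : (colourGraphOn χ d A B).Reachable (inl x) (inl x')) :
    compLeft χ d A B x = compLeft χ d A B x' := by
  ext a
  simp only [mem_compLeft]
  exact and_congr_right fun _ => ⟨fun ha => ha.trans h, fun ha => ha.trans h.symm⟩

lemma compRight_eq_of_reachable (h : (colourGraphOn χ d A B).Reachable (inl x) (inl x')) :
    compRight χ d A B x = compRight χ d A B x' := by
  ext b
  simp only [mem_compRight]
  exact and_congr_right fun _ => ⟨fun hb => hb.trans h, fun hb => hb.trans h.symm⟩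

lemma compSize_eq_of_reachable (h : (colourGraphOn χ d A B).Reachable (inl x) (inl x')) :
    compSize χ d A B x = compSize χ d A B x' := by
  rw [compSize, compSize, compLeft_eq_of_reachable h, compRight_eq_of_reachable h]

lemma compSize_le : compSize χ d A B x ≤ A.card + B.card :=
  add_le_add (card_le_card compLeft_subset) (card_le_card compRight_subset)

lemma disjoint_compLeft (h : ¬ (colourGraphOn χ d A B).Reachable (inl x) (inl x')) :
    Disjoint (compLeft χ d A B x) (compLeft χ d A B x') :=
  disjoint_left.2 fun _ ha ha' => h ((mem_compLeft.1 ha).2.symm.trans (mem_compLeft.1 ha').2)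

lemma disjoint_compRight (h : ¬ (colourGraphOn χ d A B).Reachable (inl x) (inl x')) :
    Disjoint (compRight χ d A B x) (compRight χ d A B x') :=
  disjoint_left.2 fun _ hb hb' => h ((mem_compRight.1 hb).2.symm.trans (mem_compRight.1 hb').2)

lemma compSize_add_compSize_le (h : ¬ (colourGraphOn χ d A B).Reachable (inl x) (inl x')) :
    compSize χ d A B x + compSize χ d A B x' ≤ A.card + B.card := by
  classical
  have hA : (compLeft χ d A B x).card + (compLeft χ d A B x').card ≤ A.card := by
    rw [← card_union_of_disjoint (disjoint_compLeft h)]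
    exact card_le_card (union_subset compLeft_subset compLeft_subset)
  have hB : (compRight χ d A B x).card + (compRight χ d A B x').card ≤ B.card := by
    rw [← card_union_of_disjoint (disjoint_compRight h)]
    exact card_le_card (union_subset compRight_subset compRight_subset)
  unfold compSize
  omega

lemma compSize_mono (hA : A' ⊆ A) (hB : B' ⊆ B) : compSize χ d A' B' x ≤ compSize χ d A B x := by
  have hG := colourGraphOn_mono (χ := χ) (d := d) hA hB
  refine add_le_add (card_le_card fun a ha => ?_) (card_le_card fun b hb => ?_)
  · exact mem_compLeft.2 ⟨hA (mem_compLeft.1 ha).1, (mem_compLeft.1 ha).2.mono hG⟩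
  · exact mem_compRight.2 ⟨hB (mem_compRight.1 hb).1, (mem_compRight.1 hb).2.mono hG⟩

lemma compSize_le_one (h : ∀ b ∈ B, χ x b ≠ d) : compSize χ d A B x ≤ 1 := by
  have hiso : ∀ v, (colourGraphOn χ d A B).Reachable v (inl x) → v = inl x := by
    intro v hv
    obtain ⟨p⟩ := hv.symm
    cases p with
    | nil => rfl
    | cons hadj _ =>
      obtain ⟨b, hb, hxb⟩ := colourGraphOn_adj_inl hadj
      exact absurd hxb (h b hb)
  have hL : compLeft χ d A B x ⊆ {x} := fun a ha =>
    mem_singleton.2 (inl_injective (hiso _ (mem_compLeft.1 ha).2))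
  have hR : compRight χ d A B x = ∅ := eq_empty_of_forall_notMem fun b hb =>
    inr_ne_inl (hiso _ (mem_compRight.1 hb).2)
  simpa [compSize, hR] using card_le_card hL

end Components

section SmallComponents

variable [DecidableEq α] [DecidableEq β] {χ : α → β → Fin r} {d : Fin r}
  {A : Finset α} {B : Finset β}

lemma compSize_sdiff_add_two_mul_card_le {M : Finset (α × β)} {x : α} (hM : IsMatching M)
    (hMd : ∀ p ∈ M, p.1 ∈ A ∧ p.2 ∈ B ∧ χ p.1 p.2 = d)
    (hMx : ∀ p ∈ M, (colourGraphOn χ d A B).Reachable (inl p.1) (inl x)) :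
    compSize χ d (A \ M.image Prod.fst) (B \ M.image Prod.snd) x + 2 * M.card ≤
      compSize χ d A B x := by
  have hG := colourGraphOn_mono (χ := χ) (d := d) (sdiff_subset (s := A) (t := M.image Prod.fst))
    (sdiff_subset (s := B) (t := M.image Prod.snd))
  have hL : (compLeft χ d (A \ M.image Prod.fst) (B \ M.image Prod.snd) x).card + M.card ≤
      (compLeft χ d A B x).card := by
    rw [← card_image_of_injOn hM.1, ← card_union_of_disjoint
      (disjoint_left.2 fun a ha => (mem_sdiff.1 (compLeft_subset ha)).2)]
    refine card_le_card (union_subset (fun a ha => ?_) fun a ha => ?_)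
    · exact mem_compLeft.2 ⟨(mem_sdiff.1 (mem_compLeft.1 ha).1).1, (mem_compLeft.1 ha).2.mono hG⟩
    · obtain ⟨p, hp, rfl⟩ := mem_image.1 ha
      exact mem_compLeft.2 ⟨(hMd p hp).1, hMx p hp⟩
  have hR : (compRight χ d (A \ M.image Prod.fst) (B \ M.image Prod.snd) x).card + M.card ≤
      (compRight χ d A B x).card := by
    rw [← card_image_of_injOn hM.2, ← card_union_of_disjoint
      (disjoint_left.2 fun b hb => (mem_sdiff.1 (compRight_subset hb)).2)]
    refine card_le_card (union_subset (fun b hb => ?_) fun b hb => ?_)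
    · exact mem_compRight.2 ⟨(mem_sdiff.1 (mem_compRight.1 hb).1).1,
        (mem_compRight.1 hb).2.mono hG⟩
    · obtain ⟨p, hp, rfl⟩ := mem_image.1 hb
      exact mem_compRight.2 ⟨(hMd p hp).2.1,
        (colourGraphOn_adj_inl_inr.2 (hMd p hp)).symm.reachable.trans (hMx p hp)⟩
  unfold compSize
  omega

/-- Take for `M` a maximal matching of the component of `xa`, truncated to `|A| - s` edges. Without
truncation that component is left with no edges; with it, what remains of the component has size
at most `compSize xa - 2 (|A| - s) ≤ s`. -/
lemma exists_connMatching_compSize_le_of_le {xa : α} {s : ℕ} (hs : s ≤ A.card)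
    (hxa : compSize χ d A B xa + s ≤ 2 * A.card)
    (hother : ∀ x ∈ A, ¬ (colourGraphOn χ d A B).Reachable (inl x) (inl xa) →
      compSize χ d A B x ≤ s) :
    ∃ M, IsConnMatching χ d M ∧ M.image Prod.fst ⊆ A ∧ M.image Prod.snd ⊆ B ∧
      ∀ x ∈ A \ M.image Prod.fst,
        compSize χ d (A \ M.image Prod.fst) (B \ M.image Prod.snd) x ≤
          (A \ M.image Prod.fst).card := by
  classical
  set G := colourGraphOn χ d A B
  obtain ⟨P, hPE, hP, hPmax⟩ := exists_maximal_matching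
    ((A ×ˢ B).filter fun p => χ p.1 p.2 = d ∧ G.Reachable (inl p.1) (inl xa))
  obtain ⟨M, hMP, hMcard⟩ := exists_subset_card_eq (min_le_left P.card (A.card - s))
  have hM : IsMatching M := hP.mono hMP
  have hMmem : ∀ p ∈ M, p.1 ∈ A ∧ p.2 ∈ B ∧ χ p.1 p.2 = d ∧ G.Reachable (inl p.1) (inl xa) :=
    fun p hp => by simpa [and_assoc] using hPE (hMP hp)
  have hMA : M.image Prod.fst ⊆ A := fun a ha => by
    obtain ⟨p, hp, rfl⟩ := mem_image.1 ha
    exact (hMmem p hp).1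
  have hMB : M.image Prod.snd ⊆ B := fun b hb => by
    obtain ⟨p, hp, rfl⟩ := mem_image.1 hb
    exact (hMmem p hp).2.1
  refine ⟨M, ⟨hM, fun p hp => (hMmem p hp).2.2.1, fun p hp q hq =>
    ((hMmem p hp).2.2.2.trans (hMmem q hq).2.2.2.symm).mono colourGraphOn_le⟩, hMA, hMB,
    fun x hx => ?_⟩
  have hA' : (A \ M.image Prod.fst).card = A.card - M.card := by
    rw [card_sdiff_of_subset hMA, card_image_of_injOn hM.1]
  have hxA := (mem_sdiff.1 hx).1
  have hA'pos : 0 < (A \ M.image Prod.fst).card := card_pos.2 ⟨x, hx⟩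
  by_cases hreach : G.Reachable (inl x) (inl xa)
  · by_cases hPs : P.card ≤ A.card - s
    · obtain rfl : M = P := eq_of_subset_of_card_le hMP (by omega)
      refine (compSize_le_one fun y hy hxy => ?_).trans hA'pos
      rcases hPmax (x, y) (by simp [hxA, (mem_sdiff.1 hy).1, hxy, hreach]) with h | h
      exacts [(mem_sdiff.1 hx).2 h, (mem_sdiff.1 hy).2 h]
    · have := compSize_sdiff_add_two_mul_card_le hM (fun p hp => ⟨(hMmem p hp).1,
        (hMmem p hp).2.1, (hMmem p hp).2.2.1⟩) fun p hp => (hMmem p hp).2.2.2.trans hreach.symm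
      rw [compSize_eq_of_reachable hreach] at this
      omega
  · exact (compSize_mono sdiff_subset sdiff_subset).trans ((hother x hxA hreach).trans (by omega))

lemma exists_connMatching_compSize_le (hAB : A.card = B.card) :
    ∃ M, IsConnMatching χ d M ∧ M.image Prod.fst ⊆ A ∧ M.image Prod.snd ⊆ B ∧
      ∀ x ∈ A \ M.image Prod.fst,
        compSize χ d (A \ M.image Prod.fst) (B \ M.image Prod.snd) x ≤
          (A \ M.image Prod.fst).card := by
  classical
  rcases A.eq_empty_or_nonempty with rfl | hA
  · exact ⟨∅, isConnMatching_empty χ d, by simp, by simp, by simp⟩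
  set G := colourGraphOn χ d A B
  obtain ⟨xa, -, hmax⟩ := exists_max_image A (compSize χ d A B) hA
  set s := (A.filter fun x => ¬ G.Reachable (inl x) (inl xa)).sup (compSize χ d A B)
  have hs : s ≤ A.card + B.card - compSize χ d A B xa := Finset.sup_le fun x hx => by
    have := compSize_add_compSize_le (mem_filter.1 hx).2
    omega
  have hsxa : s ≤ compSize χ d A B xa := Finset.sup_le fun x hx => hmax x (mem_filter.1 hx).1
  have := compSize_le (χ := χ) (d := d) (A := A) (B := B) (x := xa)
  refine exists_connMatching_compSize_le_of_le (xa := xa) (s := s) (by omega) (by omega)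
    fun x hx hx' => ?_
  exact le_sup (f := compSize χ d A B) (mem_filter.2 ⟨hx, hx'⟩)

end SmallComponents

section TwoColourComponents

variable {χ : α → β → Fin r} {d e : Fin r} {A : Finset α} {B : Finset β} {x x' x₀ x₁ : α} {y : β}

lemma colour_eq_of_notMem_compRight (hde : ∀ x ∈ A, ∀ y ∈ B, χ x y = d ∨ χ x y = e)
    (hx : x ∈ A) (hy : y ∈ B) (hxy : y ∉ compRight χ d A B x) : χ x y = e :=
  (hde x hx y hy).resolve_left fun h =>
    hxy (mem_compRight.2 ⟨hy, (colourGraphOn_adj_inl_inr.2 ⟨hx, hy, h⟩).symm.reachable⟩)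

lemma exists_notMem_compRight (hAB : A.card = B.card) (hx : x ∈ A)
    (hsmall : compSize χ d A B x ≤ A.card) : ∃ y ∈ B, y ∉ compRight χ d A B x := by
  have := card_pos.2 ⟨x, mem_compLeft_self (χ := χ) (d := d) (B := B) hx⟩
  unfold compSize at hsmall
  exact exists_mem_notMem_of_card_lt_card (by omega)

lemma reachable_of_notMem_compRight (hde : ∀ x ∈ A, ∀ y ∈ B, χ x y = d ∨ χ x y = e)
    (hx : x ∈ A) (hx' : x' ∈ A) (hy : y ∈ B) (h : y ∉ compRight χ d A B x)
    (h' : y ∉ compRight χ d A B x') : (colourGraph χ e).Reachable (inl x) (inl x') :=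
  (colourGraph_adj_inl_inr.2 (colour_eq_of_notMem_compRight hde hx hy h)).reachable.trans
    (colourGraph_adj_inl_inr.2 (colour_eq_of_notMem_compRight hde hx' hy h')).symm.reachable

lemma reachable_of_reachable_colourGraphOn (hAB : A.card = B.card)
    (hde : ∀ x ∈ A, ∀ y ∈ B, χ x y = d ∨ χ x y = e)
    (hsmall : ∀ x ∈ A, compSize χ d A B x ≤ A.card) (hx : x ∈ A) (hx' : x' ∈ A)
    (h : (colourGraphOn χ d A B).Reachable (inl x) (inl x')) :
    (colourGraph χ e).Reachable (inl x) (inl x') := by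
  obtain ⟨y, hy, hxy⟩ := exists_notMem_compRight hAB hx (hsmall x hx)
  exact reachable_of_notMem_compRight hde hx hx' hy hxy (compRight_eq_of_reachable h ▸ hxy)

lemma mem_compRight_or_mem_compRight (hde : ∀ x ∈ A, ∀ y ∈ B, χ x y = d ∨ χ x y = e)
    (hx₀ : x₀ ∈ A) (hx₁ : x₁ ∈ A) (h : ¬ (colourGraph χ e).Reachable (inl x₀) (inl x₁))
    (hy : y ∈ B) : y ∈ compRight χ d A B x₀ ∨ y ∈ compRight χ d A B x₁ := by
  by_contra! hy'
  exact h (reachable_of_notMem_compRight hde hx₀ hx₁ hy hy'.1 hy'.2)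

/-- A vertex outside both components would be joined in colour `e` to all of `B`, and so
would link `x₀` to `x₁`. -/
lemma mem_compLeft_or_mem_compLeft (hAB : A.card = B.card)
    (hde : ∀ x ∈ A, ∀ y ∈ B, χ x y = d ∨ χ x y = e)
    (hsmall : ∀ x ∈ A, compSize χ d A B x ≤ A.card)
    (hx₀ : x₀ ∈ A) (hx₁ : x₁ ∈ A) (h : ¬ (colourGraph χ e).Reachable (inl x₀) (inl x₁))
    (hx : x ∈ A) : x ∈ compLeft χ d A B x₀ ∨ x ∈ compLeft χ d A B x₁ := by
  by_contra! hx'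
  have hnot : ∀ {z y}, x ∉ compLeft χ d A B z → y ∈ compRight χ d A B z →
      y ∉ compRight χ d A B x := fun hxz hyz hyx =>
    hxz (mem_compLeft.2 ⟨hx, (mem_compRight.1 hyx).2.symm.trans (mem_compRight.1 hyz).2⟩)
  obtain ⟨y₁, hy₁, hy₁'⟩ := exists_notMem_compRight hAB hx₀ (hsmall x₀ hx₀)
  obtain ⟨y₀, hy₀, hy₀'⟩ := exists_notMem_compRight hAB hx₁ (hsmall x₁ hx₁)
  have hy₁Y := (mem_compRight_or_mem_compRight hde hx₀ hx₁ h hy₁).resolve_left hy₁'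
  have hy₀Y := (mem_compRight_or_mem_compRight hde hx₀ hx₁ h hy₀).resolve_right hy₀'
  exact h ((reachable_of_notMem_compRight hde hx₀ hx hy₁ hy₁' (hnot hx'.2 hy₁Y)).trans
    (reachable_of_notMem_compRight hde hx hx₁ hy₀ (hnot hx'.1 hy₀Y) hy₀'))

lemma forall_colour_eq_of_not_reachable (hde : ∀ x ∈ A, ∀ y ∈ B, χ x y = d ∨ χ x y = e)
    (h : ¬ (colourGraphOn χ d A B).Reachable (inl x₀) (inl x₁)) :
    ∀ x ∈ compLeft χ d A B x₀, ∀ y ∈ compRight χ d A B x₁, χ x y = e := by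
  intro x hx y hy
  have hx₀ := (mem_compLeft.1 hx).2
  refine colour_eq_of_notMem_compRight hde (compLeft_subset hx) (compRight_subset hy) ?_
  rw [compRight_eq_of_reachable hx₀]
  exact disjoint_left.1 (disjoint_compRight h).symm hy

end TwoColourComponents

section TwoColours

variable [DecidableEq α] [DecidableEq β] {χ : α → β → Fin r} {d e : Fin r}
  {A : Finset α} {B : Finset β} {x₀ x₁ : α}

lemma exists_perfect_matching (hAB : A.card = B.card)
    (hall : ∀ S ⊆ A, S.card ≤ (B.filter fun b => ∃ a ∈ S, χ a b = e).card) :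
    ∃ P, IsMatching P ∧ (∀ p ∈ P, χ p.1 p.2 = e) ∧ P.image Prod.fst = A ∧
      P.image Prod.snd = B := by
  obtain ⟨f, hf, hft⟩ := (all_card_le_biUnion_card_iff_exists_injective
    fun a : A => B.filter fun b => χ a b = e).1 fun S => by
    calc S.card = (S.map (Function.Embedding.subtype _)).card := (card_map _).symm
      _ ≤ (B.filter fun b => ∃ a ∈ S.map (Function.Embedding.subtype _), χ a b = e).card :=
        hall _ fun a ha => by
          obtain ⟨a, -, rfl⟩ := mem_map.1 ha
          exact a.2
      _ ≤ _ := card_le_card fun b hb => by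
        obtain ⟨hb, _, hmap, hab⟩ := mem_filter.1 hb
        obtain ⟨a, ha, rfl⟩ := mem_map.1 hmap
        exact mem_biUnion.2 ⟨a, ha, mem_filter.2 ⟨hb, hab⟩⟩
  have hfB : ∀ a, f a ∈ B ∧ χ a (f a) = e := fun a => mem_filter.1 (hft a)
  have hfA : A.attach.image f = B := eq_of_subset_of_card_le
    (fun b hb => by
      obtain ⟨a, -, rfl⟩ := mem_image.1 hb
      exact (hfB a).1)
    (by rw [card_image_of_injective _ hf, card_attach, hAB])
  refine ⟨A.attach.image fun a => (a.1, f a), ⟨?_, ?_⟩, ?_, ?_, ?_⟩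
  · rintro _ hp _ hq h
    obtain ⟨a, -, rfl⟩ := mem_image.1 hp
    obtain ⟨b, -, rfl⟩ := mem_image.1 hq
    rw [Subtype.ext h]
  · rintro _ hp _ hq h
    obtain ⟨a, -, rfl⟩ := mem_image.1 hp
    obtain ⟨b, -, rfl⟩ := mem_image.1 hq
    rw [hf h]
  · intro p hp
    obtain ⟨a, -, rfl⟩ := mem_image.1 hp
    exact (hfB a).2
  · rw [image_image]
    exact attach_image_val
  · rwa [image_image]

lemma exists_connMatching_of_forall_colour_eq {X : Finset α} {Y : Finset β}
    (hXY : X.card = Y.card) (h : ∀ x ∈ X, ∀ y ∈ Y, χ x y = e) :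
    ∃ P, IsConnMatching χ e P ∧ P.image Prod.fst = X ∧ P.image Prod.snd = Y := by
  obtain ⟨P, hP, hPe, hPX, hPY⟩ := exists_perfect_matching hXY fun S hS => by
    rcases S.eq_empty_or_nonempty with rfl | ⟨a, ha⟩
    · simp
    · rw [filter_true_of_mem fun b hb => ⟨a, ha, h a (hS ha) b hb⟩, ← hXY]
      exact card_le_card hS
  refine ⟨P, ⟨hP, hPe, fun p hp q hq => ?_⟩, hPX, hPY⟩
  have hqp : χ q.1 p.2 = e := h _ (hPX ▸ mem_image_of_mem _ hq) _ (hPY ▸ mem_image_of_mem _ hp)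
  exact (colourGraph_adj_inl_inr.2 (hPe p hp)).reachable.trans
    (colourGraph_adj_inl_inr.2 hqp).symm.reachable

/-- Hall's condition for the colour-`e` edges: if `S` lies in one `d`-component `X ∪ Y`, its
`e`-neighbourhood contains `B \ Y`; otherwise it is all of `B`. -/
lemma card_le_card_filter_colour_eq (hAB : A.card = B.card)
    (hde : ∀ x ∈ A, ∀ y ∈ B, χ x y = d ∨ χ x y = e)
    (hsmall : ∀ x ∈ A, compSize χ d A B x ≤ A.card) {S : Finset α} (hS : S ⊆ A) :
    S.card ≤ (B.filter fun b => ∃ a ∈ S, χ a b = e).card := by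
  rcases S.eq_empty_or_nonempty with rfl | ⟨x₀, hx₀⟩
  · simp
  have hN : ∀ x ∈ S, B \ compRight χ d A B x ⊆ B.filter fun b => ∃ a ∈ S, χ a b = e :=
    fun x hx y hy => mem_filter.2 ⟨(mem_sdiff.1 hy).1, x, hx,
      colour_eq_of_notMem_compRight hde (hS hx) (mem_sdiff.1 hy).1 (mem_sdiff.1 hy).2⟩
  by_cases hSx₀ : S ⊆ compLeft χ d A B x₀
  · have := hsmall x₀ (hS hx₀)
    unfold compSize at this
    calc S.card ≤ (compLeft χ d A B x₀).card := card_le_card hSx₀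
      _ ≤ (B \ compRight χ d A B x₀).card := by
        rw [card_sdiff_of_subset compRight_subset]
        omega
      _ ≤ _ := card_le_card (hN x₀ hx₀)
  · obtain ⟨x₁, hx₁, hx₁'⟩ := not_subset.1 hSx₀
    have hnr : ¬ (colourGraphOn χ d A B).Reachable (inl x₀) (inl x₁) := fun h =>
      hx₁' (mem_compLeft.2 ⟨hS hx₁, h.symm⟩)
    have hB : B ⊆ (B \ compRight χ d A B x₀) ∪ (B \ compRight χ d A B x₁) := fun y hy => by
      by_cases h₀ : y ∈ compRight χ d A B x₀
      · exact mem_union_right _ (mem_sdiff.2 ⟨hy, disjoint_left.1 (disjoint_compRight hnr) h₀⟩)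
      · exact mem_union_left _ (mem_sdiff.2 ⟨hy, h₀⟩)
    calc S.card ≤ A.card := card_le_card hS
      _ = B.card := hAB
      _ ≤ _ := card_le_card (hB.trans (union_subset (hN x₀ hx₀) (hN x₁ hx₁)))

lemma matchingPartitionable_two_of_reachable (hAB : A.card = B.card)
    (hde : ∀ x ∈ A, ∀ y ∈ B, χ x y = d ∨ χ x y = e)
    (hsmall : ∀ x ∈ A, compSize χ d A B x ≤ A.card)
    (hA : ∀ x ∈ A, ∀ x' ∈ A, (colourGraph χ e).Reachable (inl x) (inl x')) :
    MatchingPartitionable χ 2 A B := by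
  obtain ⟨P, hP, hPe, hPA, hPB⟩ :=
    exists_perfect_matching hAB fun S hS => card_le_card_filter_colour_eq hAB hde hsmall hS
  have hPc : IsConnMatching χ e P := ⟨hP, hPe, fun p hp q hq =>
    hA _ (hPA ▸ mem_image_of_mem _ hp) _ (hPA ▸ mem_image_of_mem _ hq)⟩
  simpa [hPA, hPB] using
    (MatchingPartitionable.empty 1).cons hPc (disjoint_empty_right _) (disjoint_empty_right _)

/-- The `d`-components `X₀ ∪ Y₀` of `x₀` and `X₁ ∪ Y₁` of `x₁` cover `A ∪ B`, and `X₀ × Y₁`,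
`X₁ × Y₀` are complete in colour `e`, with `|X₀| = |Y₁|` and `|X₁| = |Y₀|` by the size bound. -/
lemma matchingPartitionable_two_of_not_reachable (hAB : A.card = B.card)
    (hde : ∀ x ∈ A, ∀ y ∈ B, χ x y = d ∨ χ x y = e)
    (hsmall : ∀ x ∈ A, compSize χ d A B x ≤ A.card)
    (hx₀ : x₀ ∈ A) (hx₁ : x₁ ∈ A) (h : ¬ (colourGraph χ e).Reachable (inl x₀) (inl x₁)) :
    MatchingPartitionable χ 2 A B := by
  have hd : ¬ (colourGraphOn χ d A B).Reachable (inl x₀) (inl x₁) := fun h' =>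
    h (reachable_of_reachable_colourGraphOn hAB hde hsmall hx₀ hx₁ h')
  have hX : compLeft χ d A B x₀ ∪ compLeft χ d A B x₁ = A :=
    (union_subset compLeft_subset compLeft_subset).antisymm fun x hx =>
      mem_union.2 (mem_compLeft_or_mem_compLeft hAB hde hsmall hx₀ hx₁ h hx)
  have hY : compRight χ d A B x₁ ∪ compRight χ d A B x₀ = B :=
    (union_subset compRight_subset compRight_subset).antisymm fun y hy =>
      mem_union.2 (mem_compRight_or_mem_compRight hde hx₀ hx₁ h hy).symm
  have hXcard := card_union_of_disjoint (disjoint_compLeft hd)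
  have hYcard := card_union_of_disjoint (disjoint_compRight hd).symm
  rw [hX] at hXcard
  rw [hY] at hYcard
  have h₀ := hsmall x₀ hx₀
  have h₁ := hsmall x₁ hx₁
  unfold compSize at h₀ h₁
  obtain ⟨P₀, hP₀, hP₀X, hP₀Y⟩ :=
    exists_connMatching_of_forall_colour_eq (by omega) (forall_colour_eq_of_not_reachable hde hd)
  obtain ⟨P₁, hP₁, hP₁X, hP₁Y⟩ := exists_connMatching_of_forall_colour_eq (by omega)
    (forall_colour_eq_of_not_reachable hde fun h' => hd h'.symm)
  have := ((MatchingPartitionable.empty 0).cons hP₁ (disjoint_empty_right _)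
    (disjoint_empty_right _)).cons hP₀ (by simpa [hP₀X, hP₁X] using disjoint_compLeft hd)
    (by simpa [hP₀Y, hP₁Y] using (disjoint_compRight hd).symm)
  rwa [hP₀X, hP₁X, hP₀Y, hP₁Y, union_empty, union_empty, hX, hY] at this

theorem matchingPartitionable_two_of_compSize_le (hAB : A.card = B.card)
    (hde : ∀ x ∈ A, ∀ y ∈ B, χ x y = d ∨ χ x y = e)
    (hsmall : ∀ x ∈ A, compSize χ d A B x ≤ A.card) : MatchingPartitionable χ 2 A B := by
  by_cases hA : ∀ x ∈ A, ∀ x' ∈ A, (colourGraph χ e).Reachable (inl x) (inl x')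
  · exact matchingPartitionable_two_of_reachable hAB hde hsmall hA
  · push Not at hA
    obtain ⟨x₀, hx₀, x₁, hx₁, h⟩ := hA
    exact matchingPartitionable_two_of_not_reachable hAB hde hsmall hx₀ hx₁ h

theorem matchingPartitionable_three_of_two_colours (hAB : A.card = B.card)
    (hde : ∀ x ∈ A, ∀ y ∈ B, χ x y = d ∨ χ x y = e) : MatchingPartitionable χ 3 A B := by
  obtain ⟨M, hM, hMA, hMB, hsmall⟩ := exists_connMatching_compSize_le (χ := χ) (d := d) hAB
  exact .cons_sdiff hM hMA hMB (matchingPartitionable_two_of_compSize_le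
    (hM.isMatching.card_sdiff_eq hMA hMB hAB)
    (fun x hx y hy => hde x (mem_sdiff.1 hx).1 y (mem_sdiff.1 hy).1) hsmall)

end TwoColours

section MaximalColourMatching

variable {χ : α → β → Fin r} {c : Fin r}

lemma nontriv_connectedComponentMk {a : α} {b : β} (h : χ a b = c) :
    Nontriv χ c ((colourGraph χ c).connectedComponentMk (inl a)) :=
  ⟨⟨a, rfl⟩, ⟨b, ConnectedComponent.sound (colourGraph_adj_inl_inr.2 h).symm.reachable⟩⟩

lemma exists_isConnMatching_sdiff [DecidableEq α] [DecidableEq β]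
    (hc : ¬ ∃ K₁ K₂ K₃ : (colourGraph χ c).ConnectedComponent,
      K₁ ≠ K₂ ∧ K₁ ≠ K₃ ∧ K₂ ≠ K₃ ∧ Nontriv χ c K₁ ∧ Nontriv χ c K₂ ∧ Nontriv χ c K₃)
    {P : Finset (α × β)} (hP : IsMatching P) (hPc : ∀ p ∈ P, χ p.1 p.2 = c) :
    ∃ Q ⊆ P, IsConnMatching χ c Q ∧ IsConnMatching χ c (P \ Q) := by
  classical
  rcases P.eq_empty_or_nonempty with rfl | ⟨p₀, hp₀⟩
  · exact ⟨∅, empty_subset _, isConnMatching_empty χ c, by simpa using isConnMatching_empty χ c⟩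
  set K : α × β → (colourGraph χ c).ConnectedComponent :=
    fun p => (colourGraph χ c).connectedComponentMk (inl p.1)
  have hK : ∀ p ∈ P, Nontriv χ c (K p) := fun p hp => nontriv_connectedComponentMk (hPc p hp)
  refine ⟨P.filter fun p => K p = K p₀, filter_subset _ _,
    ⟨hP.mono (filter_subset _ _), fun p hp => hPc p (mem_filter.1 hp).1, fun p hp q hq => ?_⟩,
    ⟨hP.mono sdiff_subset, fun p hp => hPc p (mem_sdiff.1 hp).1, fun p hp q hq => ?_⟩⟩
  · exact ConnectedComponent.exact ((mem_filter.1 hp).2.trans (mem_filter.1 hq).2.symm)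
  · simp only [mem_sdiff, mem_filter, not_and] at hp hq
    refine ConnectedComponent.exact (by_contra fun hpq => hc ⟨K p₀, K p, K q,
      Ne.symm (hp.2 hp.1), Ne.symm (hq.2 hq.1), hpq, hK p₀ hp₀, hK p hp.1, hK q hq.1⟩)

/-- A maximal colour-`c` matching splits along the (at most two) non-trivial colour-`c`
components, and leaves no colour-`c` edge among the unmatched vertices. -/
theorem matchingPartitionable_univ_of_not_three_nontriv [Fintype α] [Fintype β]
    [DecidableEq α] [DecidableEq β] {k : ℕ} (hαβ : Fintype.card α = Fintype.card β)
    (hc : ¬ ∃ K₁ K₂ K₃ : (colourGraph χ c).ConnectedComponent,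
      K₁ ≠ K₂ ∧ K₁ ≠ K₃ ∧ K₂ ≠ K₃ ∧ Nontriv χ c K₁ ∧ Nontriv χ c K₂ ∧ Nontriv χ c K₃)
    (hrest : ∀ (A : Finset α) (B : Finset β), A.card = B.card →
      (∀ x ∈ A, ∀ y ∈ B, χ x y ≠ c) → MatchingPartitionable χ k A B) :
    MatchingPartitionable χ (k + 2) univ univ := by
  obtain ⟨P, hPE, hP, hPmax⟩ :=
    exists_maximal_matching (univ.filter fun p : α × β => χ p.1 p.2 = c)
  obtain ⟨Q, hQP, hQ, hPQ⟩ :=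
    exists_isConnMatching_sdiff hc hP fun p hp => (mem_filter.1 (hPE hp)).2
  have hL := image_sdiff_of_injOn hP.1 hQP
  have hR := image_sdiff_of_injOn hP.2 hQP
  refine .cons_sdiff hQ (subset_univ _) (subset_univ _) (.cons_sdiff hPQ ?_ ?_ ?_)
  · exact hL ▸ sdiff_subset_sdiff (subset_univ _) le_rfl
  · exact hR ▸ sdiff_subset_sdiff (subset_univ _) le_rfl
  rw [hL, hR, sdiff_sdiff_sdiff_cancel_right (image_subset_image hQP),
    sdiff_sdiff_sdiff_cancel_right (image_subset_image hQP)]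
  refine hrest _ _ (hP.card_sdiff_eq (subset_univ _) (subset_univ _) (by simpa using hαβ))
    fun x hx y hy hxy => ?_
  rcases hPmax (x, y) (by simpa using hxy) with h | h
  exacts [(mem_sdiff.1 hx).2 h, (mem_sdiff.1 hy).2 h]

end MaximalColourMatching

/-- If a 3-edge-coloured `K_{n,n}` cannot be partitioned into at most five
monochromatic connected matchings, then every colour has at least three
non-trivial monochromatic components. -/
theorem three_nontrivial_components_of_no_five_partition
    {n : ℕ} (χ : Fin n → Fin n → Fin 3) (h : ¬ FiveMatchingPartition χ)
    (c : Fin 3) :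
    ∃ K₁ K₂ K₃ : (colourGraph χ c).ConnectedComponent,
      K₁ ≠ K₂ ∧ K₁ ≠ K₃ ∧ K₂ ≠ K₃ ∧
      Nontriv χ c K₁ ∧ Nontriv χ c K₂ ∧ Nontriv χ c K₃ := by
  by_contra hc
  refine h (fiveMatchingPartition_of_matchingPartitionable
    (matchingPartitionable_univ_of_not_three_nontriv rfl hc fun A B hAB hAc => ?_))
  have hother : ∀ c f : Fin 3, f ≠ c → f = c + 1 ∨ f = c + 2 := by decide
  exact matchingPartitionable_three_of_two_colours hAB fun x hx y hy => hother c _ (hAc x hx y hy)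
end

section
/- Suppose the edges of a balanced complete bipartite graph H are 3-coloured and V(H) cannot be partitioned into at most five monochromatic connected matchings. Then no two monochromatic components together cover all vertices of H. -/
open SimpleGraph

/-!
Remove a maximal matching of `c₁`-edges inside `K₁`, then a maximal matching of `c₂`-edges
inside `K₂`. In the balanced remainder no `c₁`-edge meets `K₁` and no `c₂`-edge meets `K₂`, so
(unless `c₁ = c₂`, when only two colours are left) splitting the vertices by membership in `K₁`
makes every edge between the two sides have the third colour `y`, and every edge within a side
have `y` or a colour determined by the side. Such a graph needs three connected matchings: if all
its `y`-edges lie in one `y`-component, a maximal `y`-matching leaves a `y`-free rectangle, which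
is monochromatic; otherwise there is no `y`-edge within a side, since it would connect all
`y`-edges, and one matching per side followed by one `y`-matching suffices.
-/

open Finset

section Partitions

variable {n r : ℕ} {χ : Fin n → Fin n → Fin r}

theorem colourGraph_reachable {a b : Fin n} {c : Fin r} (h : χ a b = c) :
    (colourGraph χ c).Reachable (Sum.inl a) (Sum.inr b) :=
  Adj.reachable ⟨a, b, h, .inl ⟨rfl, rfl⟩⟩

theorem mem_supp_inl_iff_mem_supp_inr {a b : Fin n} {c : Fin r} (h : χ a b = c)
    (K : (colourGraph χ c).ConnectedComponent) :
    Sum.inl a ∈ K.supp ↔ Sum.inr b ∈ K.supp :=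
  K.mem_supp_congr_adj ⟨a, b, h, .inl ⟨rfl, rfl⟩⟩

theorem exists_cmatching_verts_eq (c : Fin r) (F : Finset (Fin n × Fin n))
    (hmono : ∀ p ∈ F, χ p.1 p.2 = c) (hinj₁ : Set.InjOn Prod.fst (F : Set (Fin n × Fin n)))
    (hinj₂ : Set.InjOn Prod.snd (F : Set (Fin n × Fin n)))
    (hconn : ∀ p ∈ F, ∀ q ∈ F, (colourGraph χ c).Reachable (Sum.inl p.1) (Sum.inl q.1)) :
    ∃ M : CMatching n r χ,
      M.verts = ↑((F.image Prod.fst).disjSum (F.image Prod.snd)) := by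
  refine ⟨⟨c, F, hmono, fun _ hp _ hq h => hinj₁ hp hq h, fun _ hp _ hq h => hinj₂ hp hq h,
    hconn, none, .inl rfl⟩, ?_⟩
  ext (a | b) <;> simp [CMatching.verts]

def Partitionable (χ : Fin n → Fin n → Fin r) : Finset (Fin n) → Finset (Fin n) → ℕ → Prop
  | A, B, 0 => A = ∅ ∧ B = ∅
  | A, B, k + 1 => ∃ A' ⊆ A, ∃ B' ⊆ B,
      (∃ M : CMatching n r χ, M.verts = ↑(A'.disjSum B')) ∧
      Partitionable χ (A \ A') (B \ B') k

theorem Partitionable.mono [NeZero r] {A B : Finset (Fin n)} {k m : ℕ}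
    (h : Partitionable χ A B k) (hkm : k ≤ m) : Partitionable χ A B m := by
  induction hkm with
  | refl => exact h
  | step _ ih =>
    refine ⟨∅, empty_subset _, ∅, empty_subset _, ?_, by simpa using ih⟩
    simpa using exists_cmatching_verts_eq (χ := χ) 0 ∅ (by simp) (by simp) (by simp) (by simp)

theorem Partitionable.exists_family {A B : Finset (Fin n)} {k : ℕ}
    (h : Partitionable χ A B k) :
    ∃ M : Fin k → CMatching n r χ, Pairwise (fun i j => Disjoint (M i).verts (M j).verts) ∧
      ⋃ i, (M i).verts = ↑(A.disjSum B) := by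
  induction k generalizing A B with
  | zero =>
    obtain ⟨rfl, rfl⟩ := h
    exact ⟨Fin.elim0, fun i => i.elim0, by simp⟩
  | succ k ih =>
    obtain ⟨A', hA', B', hB', ⟨M₀, hM₀⟩, hrest⟩ := h
    obtain ⟨M, hdisj, hunion⟩ := ih hrest
    have hV : Disjoint (A'.disjSum B') ((A \ A').disjSum (B \ B')) ∧
        A'.disjSum B' ∪ (A \ A').disjSum (B \ B') = A.disjSum B := by
      constructor
      · rw [Finset.disjoint_left]
        rintro (a | b) <;> simp +contextual
      · ext (a | b) <;> simp <;> grind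
    have hsub (i : Fin k) := hunion ▸ Set.subset_iUnion (fun i => (M i).verts) i
    refine ⟨Fin.cons M₀ M, pairwise_fin_succ_iff.2 ⟨fun i => ?_, fun i => ?_, by simpa⟩, ?_⟩
    · simpa [hM₀] using ((disjoint_coe.2 hV.1).mono_right (hsub i)).symm
    · simpa [hM₀] using (disjoint_coe.2 hV.1).mono_right (hsub i)
    · rw [Set.iUnion_fin_add_one_eq_iUnion_succ, ← hV.2, coe_union]
      simp [Function.comp_def, hM₀, hunion]

theorem partitionable_succ_of_maximal_matching {A B : Finset (Fin n)} {k : ℕ}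
    (hcard : #A = #B) (c : Fin r) (good : Fin n → Fin n → Prop)
    (hgood : ∀ a ∈ A, ∀ b ∈ B, good a b → χ a b = c)
    (hconn : ∀ a ∈ A, ∀ b ∈ B, ∀ a' ∈ A, ∀ b' ∈ B, good a b → good a' b' →
      (colourGraph χ c).Reachable (Sum.inl a) (Sum.inl a'))
    (hrest : ∀ A' ⊆ A, ∀ B' ⊆ B, #A' = #B' → (∀ a ∈ A', ∀ b ∈ B', ¬ good a b) →
      Partitionable χ A' B' k) :
    Partitionable χ A B (k + 1) := by
  classical
  let IsGoodMatching (F : Finset (Fin n × Fin n)) : Prop :=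
    (∀ p ∈ F, p.1 ∈ A ∧ p.2 ∈ B ∧ good p.1 p.2) ∧
      Set.InjOn Prod.fst (F : Set (Fin n × Fin n)) ∧ Set.InjOn Prod.snd (F : Set (Fin n × Fin n))
  obtain ⟨F, hF, hmax⟩ := exists_max_image {F | IsGoodMatching F} card
    ⟨∅, by simp [IsGoodMatching]⟩
  obtain ⟨hFgood, hinj₁, hinj₂⟩ := (mem_filter.1 hF).2
  have hA : F.image Prod.fst ⊆ A := by
    simpa [subset_iff] using fun a b h => (hFgood _ h).1
  have hB : F.image Prod.snd ⊆ B := by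
    simpa [subset_iff] using fun a b h => (hFgood _ h).2.1
  refine ⟨_, hA, _, hB, exists_cmatching_verts_eq c F
    (fun p hp => hgood _ (hFgood p hp).1 _ (hFgood p hp).2.1 (hFgood p hp).2.2) hinj₁ hinj₂
    (fun p hp q hq => hconn _ (hFgood p hp).1 _ (hFgood p hp).2.1 _ (hFgood q hq).1 _
      (hFgood q hq).2.1 (hFgood p hp).2.2 (hFgood q hq).2.2),
    hrest _ sdiff_subset _ sdiff_subset ?_ ?_⟩
  · rw [card_sdiff_of_subset hA, card_sdiff_of_subset hB, card_image_of_injOn hinj₁,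
      card_image_of_injOn hinj₂, hcard]
  · intro a ha b hb hab
    rw [mem_sdiff] at ha hb
    have hnew : (a, b) ∉ F := fun h => ha.2 (mem_image_of_mem _ h)
    have hext : IsGoodMatching (insert (a, b) F) := by
      refine ⟨?_, ?_, ?_⟩
      · simpa [hab, ha.1, hb.1] using hFgood
      · rw [coe_insert, Set.injOn_insert hnew, ← coe_image]
        exact ⟨hinj₁, ha.2⟩
      · rw [coe_insert, Set.injOn_insert hnew, ← coe_image]
        exact ⟨hinj₂, hb.2⟩
    have := hmax _ (mem_filter.2 ⟨mem_univ _, hext⟩)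
    rw [card_insert_of_notMem hnew] at this
    omega

theorem partitionable_succ_of_monochromatic {A B : Finset (Fin n)} {k : ℕ}
    (hcard : #A = #B) (c : Fin r) (p q : Fin n → Prop)
    (hc : ∀ a ∈ A, ∀ b ∈ B, p a → q b → χ a b = c)
    (hrest : ∀ A' ⊆ A, ∀ B' ⊆ B, #A' = #B' → (∀ a ∈ A', ∀ b ∈ B', ¬ (p a ∧ q b)) →
      Partitionable χ A' B' k) :
    Partitionable χ A B (k + 1) :=
  partitionable_succ_of_maximal_matching hcard c (fun a b => p a ∧ q b)
    (fun a ha b hb h => hc a ha b hb h.1 h.2)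
    (fun a ha _ _ a' ha' b' hb' h h' => (colourGraph_reachable (hc a ha b' hb' h.1 h'.2)).trans
      (colourGraph_reachable (hc a' ha' b' hb' h'.1 h'.2)).symm) hrest

theorem partitionable_one {A B : Finset (Fin n)} (hcard : #A = #B) {c : Fin r}
    (hc : ∀ a ∈ A, ∀ b ∈ B, χ a b = c) : Partitionable χ A B 1 := by
  refine partitionable_succ_of_monochromatic hcard c (fun _ => True) (fun _ => True)
    (fun a ha b hb _ _ => hc a ha b hb) fun A' _ B' _ hcard' hnone => ?_
  rcases A'.eq_empty_or_nonempty with rfl | ⟨a, ha⟩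
  · exact ⟨rfl, card_eq_zero.1 (hcard'.symm.trans card_empty)⟩
  · obtain ⟨b, hb⟩ := card_pos.1 (hcard' ▸ card_pos.2 ⟨a, ha⟩)
    exact absurd ⟨trivial, trivial⟩ (hnone a ha b hb)

theorem partitionable_two {A B : Finset (Fin n)} (hcard : #A = #B) (y : Fin r)
    (hconn : ∀ a ∈ A, ∀ b ∈ B, ∀ a' ∈ A, ∀ b' ∈ B, χ a b = y → χ a' b' = y →
      (colourGraph χ y).Reachable (Sum.inl a) (Sum.inl a'))
    (hmono : ∀ A' ⊆ A, ∀ B' ⊆ B, (∀ a ∈ A', ∀ b ∈ B', χ a b ≠ y) →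
      ∃ z, ∀ a ∈ A', ∀ b ∈ B', χ a b = z) :
    Partitionable χ A B 2 :=
  partitionable_succ_of_maximal_matching hcard y (fun a b => χ a b = y) (fun _ _ _ _ h => h) hconn
    fun A' hA' B' hB' hcard' hfree =>
      have ⟨_, hz⟩ := hmono A' hA' B' hB' hfree
      partitionable_one hcard' hz

theorem partitionable_three_of_blocks {A B : Finset (Fin n)} (hcard : #A = #B)
    (σ : Fin n ⊕ Fin n → Bool) (x : Bool → Fin r) (y : Fin r)
    (hχ : ∀ a ∈ A, ∀ b ∈ B,
      χ a b = if σ (.inl a) = σ (.inr b) then x (σ (.inl a)) else y) :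
    Partitionable χ A B 3 := by
  have hdiag (s : Bool) : ∀ a ∈ A, ∀ b ∈ B, σ (.inl a) = s → σ (.inr b) = s → χ a b = x s :=
    fun a ha b hb h h' => by rw [hχ a ha b hb, if_pos (h.trans h'.symm), h]
  refine partitionable_succ_of_monochromatic hcard (x true) (fun a => σ (.inl a) = true)
    (fun b => σ (.inr b) = true) (hdiag true) fun A₁ hA₁ B₁ hB₁ hcard₁ h₁ => ?_
  refine partitionable_succ_of_monochromatic hcard₁ (x false) (fun a => σ (.inl a) = false)
    (fun b => σ (.inr b) = false) (fun a ha b hb => hdiag false a (hA₁ ha) b (hB₁ hb))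
    fun A₂ hA₂ B₂ hB₂ hcard₂ h₂ => partitionable_one hcard₂ (c := y) fun a ha b hb => ?_
  rw [hχ a (hA₁ (hA₂ ha)) b (hB₁ (hB₂ hb)), if_neg]
  -- the maximal matchings have used up one of the two sides of each diagonal block
  intro hab
  cases hs : σ (.inl a)
  · exact h₂ a ha b hb ⟨hs, hab ▸ hs⟩
  · exact h₁ a (hA₂ ha) b (hB₂ hb) ⟨hs, hab ▸ hs⟩

theorem reachable_of_sides {A B : Finset (Fin n)} {σ : Fin n ⊕ Fin n → Bool} {y : Fin r}
    (hoff : ∀ a ∈ A, ∀ b ∈ B, σ (.inl a) ≠ σ (.inr b) → χ a b = y)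
    (hside : ∀ s, (∃ a ∈ A, σ (.inl a) = s) ∨ ∃ b ∈ B, σ (.inr b) = s)
    {a b a' b' : Fin n} (ha : a ∈ A) (hb : b ∈ B) (ha' : a' ∈ A) (hb' : b' ∈ B)
    (hab : χ a b = y) (hdiag : σ (.inl a) = σ (.inr b)) (ha'b' : χ a' b' = y) :
    (colourGraph χ y).Reachable (Sum.inl a) (Sum.inl a') := by
  by_cases h₁ : σ (.inl a') = σ (.inl a)
  · by_cases h₂ : σ (.inr b') = σ (.inl a)
    · rcases hside (!σ (.inl a)) with ⟨a₂, ha₂, hs⟩ | ⟨b₂, hb₂, hs⟩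
      · -- the path `a — b — a₂ — b' — a'`
        exact (colourGraph_reachable hab).trans
          ((colourGraph_reachable (hoff a₂ ha₂ b hb (by simp [hs, hdiag]))).symm.trans
          ((colourGraph_reachable (hoff a₂ ha₂ b' hb' (by simp [hs, h₂]))).trans
          (colourGraph_reachable ha'b').symm))
      · exact (colourGraph_reachable (hoff a ha b₂ hb₂ (by simp [hs]))).trans
          (colourGraph_reachable (hoff a' ha' b₂ hb₂ (by simp [hs, h₁]))).symm
    · exact (colourGraph_reachable (hoff a ha b' hb' (Ne.symm h₂))).trans
        (colourGraph_reachable ha'b').symm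
  · exact (colourGraph_reachable hab).trans
      (colourGraph_reachable (hoff a' ha' b hb (hdiag ▸ h₁))).symm

theorem partitionable_three_of_sides_of_forall_exists {A B : Finset (Fin n)} (hcard : #A = #B)
    (σ : Fin n ⊕ Fin n → Bool) (x : Bool → Fin r) (y : Fin r)
    (hσ : ∀ a ∈ A, ∀ b ∈ B, χ a b = y ∨ σ (.inl a) = σ (.inr b) ∧ χ a b = x (σ (.inl a)))
    (hside : ∀ s, (∃ a ∈ A, σ (.inl a) = s) ∨ ∃ b ∈ B, σ (.inr b) = s) :
    Partitionable χ A B 3 := by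
  have := NeZero.of_pos y.pos
  have hoff : ∀ a ∈ A, ∀ b ∈ B, σ (.inl a) ≠ σ (.inr b) → χ a b = y :=
    fun a ha b hb h => (hσ a ha b hb).resolve_right fun h' => h h'.1
  by_cases hconn : ∀ a ∈ A, ∀ b ∈ B, ∀ a' ∈ A, ∀ b' ∈ B, χ a b = y → χ a' b' = y →
      (colourGraph χ y).Reachable (Sum.inl a) (Sum.inl a')
  · refine (partitionable_two hcard y hconn fun A' hA' B' hB' hfree => ?_).mono (by norm_num)
    rcases A'.eq_empty_or_nonempty with rfl | ⟨a₀, ha₀⟩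
    · exact ⟨y, by simp⟩
    refine ⟨x (σ (.inl a₀)), fun a ha b hb => ?_⟩
    obtain ⟨hab, hcol⟩ := (hσ a (hA' ha) b (hB' hb)).resolve_left (hfree a ha b hb)
    obtain ⟨ha₀b, -⟩ := (hσ a₀ (hA' ha₀) b (hB' hb)).resolve_left (hfree a₀ ha₀ b hb)
    rw [hcol, hab, ha₀b]
  · push Not at hconn
    obtain ⟨a₀, ha₀, b₀, hb₀, a₁, ha₁, b₁, hb₁, h₀, h₁, hne⟩ := hconn
    refine partitionable_three_of_blocks hcard σ x y fun a ha b hb => ?_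
    split_ifs with hab
    · refine ((hσ a ha b hb).resolve_left fun hy => hne ?_).2
      exact (reachable_of_sides hoff hside ha hb ha₀ hb₀ hy hab h₀).symm.trans
        (reachable_of_sides hoff hside ha hb ha₁ hb₁ hy hab h₁)
    · exact hoff a ha b hb hab

theorem partitionable_three_of_two_colours {A B : Finset (Fin n)} (hcard : #A = #B)
    (x y : Fin r) (hxy : ∀ a ∈ A, ∀ b ∈ B, χ a b = x ∨ χ a b = y) :
    Partitionable χ A B 3 := by
  have := NeZero.of_pos x.pos
  by_cases hconn : ∀ a ∈ A, ∀ b ∈ B, ∀ a' ∈ A, ∀ b' ∈ B, χ a b = x → χ a' b' = x →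
      (colourGraph χ x).Reachable (Sum.inl a) (Sum.inl a')
  · exact (partitionable_two hcard x hconn fun A' hA' B' hB' hfree =>
      ⟨y, fun a ha b hb => (hxy a (hA' ha) b (hB' hb)).resolve_left (hfree a ha b hb)⟩).mono
        (by norm_num)
  push Not at hconn
  obtain ⟨a₀, ha₀, -, -, a₁, ha₁, -, -, -, -, hne⟩ := hconn
  classical
  let K := (colourGraph χ x).connectedComponentMk (Sum.inl a₀)
  refine partitionable_three_of_sides_of_forall_exists hcard (fun v => decide (v ∈ K.supp))
    (fun _ => x) y (fun a ha b hb => ?_) fun s => .inl ?_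
  · rcases hxy a ha b hb with h | h
    · exact .inr ⟨by simp [mem_supp_inl_iff_mem_supp_inr h], h⟩
    · exact .inl h
  · have hK : Sum.inl a₁ ∉ K.supp := fun h => hne (ConnectedComponent.exact h).symm
    cases s
    · exact ⟨a₁, ha₁, by simpa using hK⟩
    · exact ⟨a₀, ha₀, by simp [K]⟩

theorem partitionable_three_of_sides {A B : Finset (Fin n)} (hcard : #A = #B)
    (σ : Fin n ⊕ Fin n → Bool) (x : Bool → Fin r) (y : Fin r)
    (hσ : ∀ a ∈ A, ∀ b ∈ B, χ a b = y ∨ σ (.inl a) = σ (.inr b) ∧ χ a b = x (σ (.inl a))) :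
    Partitionable χ A B 3 := by
  by_cases hside : ∀ s, (∃ a ∈ A, σ (.inl a) = s) ∨ ∃ b ∈ B, σ (.inr b) = s
  · exact partitionable_three_of_sides_of_forall_exists hcard σ x y hσ hside
  push Not at hside
  obtain ⟨s, hA, -⟩ := hside
  refine partitionable_three_of_two_colours hcard (x !s) y fun a ha b hb => ?_
  rcases hσ a ha b hb with h | ⟨-, h⟩
  · exact .inr h
  · exact .inl (Bool.eq_not.2 (hA a ha) ▸ h)

end Partitions

theorem partitionable_three_of_components_cover {n : ℕ} {χ : Fin n → Fin n → Fin 3}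
    {A B : Finset (Fin n)} (hcard : #A = #B) {c₁ c₂ : Fin 3}
    (K₁ : (colourGraph χ c₁).ConnectedComponent) (K₂ : (colourGraph χ c₂).ConnectedComponent)
    (hcov : ∀ v, v ∈ K₁.supp ∨ v ∈ K₂.supp)
    (h₁ : ∀ a ∈ A, ∀ b ∈ B, ¬(χ a b = c₁ ∧ Sum.inl a ∈ K₁.supp))
    (h₂ : ∀ a ∈ A, ∀ b ∈ B, ¬(χ a b = c₂ ∧ Sum.inl a ∈ K₂.supp)) :
    Partitionable χ A B 3 := by
  rcases eq_or_ne c₁ c₂ with rfl | hne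
  · obtain ⟨x, y, hxy⟩ : ∃ x y : Fin 3, ∀ w, w ≠ c₁ → w = x ∨ w = y := by
      have : ∀ c : Fin 3, ∃ x y : Fin 3, ∀ w, w ≠ c → w = x ∨ w = y := by decide
      exact this c₁
    refine partitionable_three_of_two_colours hcard x y fun a ha b hb => hxy _ fun h => ?_
    exact (hcov (.inl a)).elim (h₁ a ha b hb ⟨h, ·⟩) (h₂ a ha b hb ⟨h, ·⟩)
  obtain ⟨c₃, hc₃⟩ : ∃ c₃, ∀ w : Fin 3, w = c₁ ∨ w = c₂ ∨ w = c₃ := by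
    have : ∀ c₁ c₂ : Fin 3, c₁ ≠ c₂ → ∃ c₃, ∀ w : Fin 3, w = c₁ ∨ w = c₂ ∨ w = c₃ := by decide
    exact this c₁ c₂ hne
  classical
  refine partitionable_three_of_sides hcard (fun v => decide (v ∈ K₁.supp))
    (fun s => if s then c₂ else c₁) c₃ fun a ha b hb => ?_
  rcases hc₃ (χ a b) with h | h | h
  · have ha₁ : Sum.inl a ∉ K₁.supp := fun ha₁ => h₁ a ha b hb ⟨h, ha₁⟩
    have hb₁ : Sum.inr b ∉ K₁.supp := (mem_supp_inl_iff_mem_supp_inr h K₁).not.1 ha₁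
    exact .inr ⟨by simp [ha₁, hb₁], by simp [ha₁, h]⟩
  · have ha₂ : Sum.inl a ∉ K₂.supp := fun ha₂ => h₂ a ha b hb ⟨h, ha₂⟩
    have hb₂ : Sum.inr b ∉ K₂.supp := (mem_supp_inl_iff_mem_supp_inr h K₂).not.1 ha₂
    have ha₁ := (hcov _).resolve_right ha₂
    have hb₁ := (hcov _).resolve_right hb₂
    exact .inr ⟨by simp [ha₁, hb₁], by simp [ha₁, h]⟩
  · exact .inl h

theorem partitionable_five_of_components_cover {n : ℕ} {χ : Fin n → Fin n → Fin 3}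
    {c₁ c₂ : Fin 3} (K₁ : (colourGraph χ c₁).ConnectedComponent)
    (K₂ : (colourGraph χ c₂).ConnectedComponent) (hcov : K₁.supp ∪ K₂.supp = Set.univ) :
    Partitionable χ univ univ 5 := by
  have hcov' (v) : v ∈ K₁.supp ∨ v ∈ K₂.supp := Set.eq_univ_iff_forall.1 hcov v
  refine partitionable_succ_of_maximal_matching rfl c₁
    (fun a b => χ a b = c₁ ∧ Sum.inl a ∈ K₁.supp) (fun _ _ _ _ h => h.1)
    (fun _ _ _ _ _ _ _ _ h h' => K₁.reachable_of_mem_supp h.2 h'.2)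
    fun A₁ _ B₁ _ hcard₁ h₁ => ?_
  refine partitionable_succ_of_maximal_matching hcard₁ c₂
    (fun a b => χ a b = c₂ ∧ Sum.inl a ∈ K₂.supp) (fun _ _ _ _ h => h.1)
    (fun _ _ _ _ _ _ _ _ h h' => K₂.reachable_of_mem_supp h.2 h'.2)
    fun A₂ hA₂ B₂ hB₂ hcard₂ h₂ => ?_
  exact partitionable_three_of_components_cover hcard₂ K₁ K₂ hcov'
    (fun a ha b hb => h₁ a (hA₂ ha) b (hB₂ hb)) h₂

/-- If a 3-edge-coloured `K_{n,n}` cannot be partitioned into at most five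
monochromatic connected matchings, then no two monochromatic components
together cover all vertices. -/
theorem no_two_components_cover_of_no_five_partition
    {n : ℕ} (χ : Fin n → Fin n → Fin 3) (h : ¬ FiveMatchingPartition χ) :
    ¬ ∃ (c₁ c₂ : Fin 3) (K₁ : (colourGraph χ c₁).ConnectedComponent)
        (K₂ : (colourGraph χ c₂).ConnectedComponent),
        K₁.supp ∪ K₂.supp = Set.univ := by
  rintro ⟨c₁, c₂, K₁, K₂, hcov⟩
  obtain ⟨M, hdisj, hunion⟩ := (partitionable_five_of_components_cover K₁ K₂ hcov).exists_family
  exact h ⟨M, hdisj, by simp [hunion]⟩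
end

section
/- In any r-edge-colouring of a properly defined blow-up construction, at least 2r−1 cycles are needed: explicitly, there exists an r-edge-colouring of K_{n,n} (for suitable n) that cannot be partitioned into fewer than 2r−1 vertex-disjoint monochromatic cycles. Concretely, one starts from a properly r-edge-coloured K_{r,r}, blows up each vertex in one class to a set of size r, and in the other class blows up one vertex to a set of size r(r−1)+1; the resulting colouring of K_{r·r, r·r} admits no partition into fewer than 2r−1 disjoint monochromatic cycles. -/
open SimpleGraph

/-- A monochromatic cycle in an `r`-edge-coloured `K_{n,n}`: an injective
cyclic sequence of vertices (of length `len ≥ 1`) whose consecutive vertices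
are joined by edges of colour `colour` whenever `len ≥ 2`.  Single vertices
(`len = 1`) and single edges (`len = 2`) count as degenerate cycles. -/
structure MonoCycle (n r : ℕ) (χ : Fin n → Fin n → Fin r) where
  colour : Fin r
  len : ℕ
  pos : 0 < len
  f : ZMod len → Fin n ⊕ Fin n
  inj : Function.Injective f
  adj : 2 ≤ len → ∀ i : ZMod len, (colourGraph χ colour).Adj (f i) (f (i + 1))

/-!
The colouring is `(x, y) ↦ P x + Q y` in `Fin r`, where `P` splits the left side into `r`
classes of size `r` and `Q` splits the right side into one big class of size `r(r - 1) + 1` and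
`r - 1` singletons. Along an edge of colour `c` the value `P x`, resp. `c - Q y`, does not change,
so a monochromatic cycle lies in `P⁻¹ A ∪ Q⁻¹ (c - A)` for a single `A`; as it alternates between
the sides, it has as many left as right vertices. Hence a cycle covering `ℓ` left and `b`
big-class vertices has `ℓ ≤ 1`, or `ℓ = b ≤ r`; in both cases `r ℓ ≤ r + (r - 1) b`. Summing over
a partition into `k` cycles gives `r · r² ≤ r k + (r - 1)(r² - r + 1)`, that is `k ≥ 2r - 1`.
-/

open Finset

section Partition

open Function

variable {ι α β : Type*} [Fintype ι]

theorem sum_card_inter_of_partition [DecidableEq α] {s : ι → Finset α}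
    (hdisj : Pairwise (Disjoint on s)) (hcover : ∀ a, ∃ i, a ∈ s i) (t : Finset α) :
    ∑ i, #(s i ∩ t) = #t := by
  rw [← card_biUnion fun i _ j _ hij => (hdisj hij).mono inter_subset_left inter_subset_left]
  congr 1
  ext a
  simpa using fun _ => hcover a

theorem sum_card_toLeft_inter_of_partition [DecidableEq α] {s : ι → Finset (α ⊕ β)}
    (hdisj : Pairwise (Disjoint on s)) (hcover : ∀ v, ∃ i, v ∈ s i) (t : Finset α) :
    ∑ i, #((s i).toLeft ∩ t) = #t :=
  sum_card_inter_of_partition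
    (fun _ _ hij => disjoint_left.2 fun _ ha ha' =>
      disjoint_left.1 (hdisj hij) (mem_toLeft.1 ha) (mem_toLeft.1 ha'))
    (fun a => (hcover (.inl a)).imp fun _ => mem_toLeft.2) t

theorem sum_card_toRight_inter_of_partition [DecidableEq β] {s : ι → Finset (α ⊕ β)}
    (hdisj : Pairwise (Disjoint on s)) (hcover : ∀ v, ∃ i, v ∈ s i) (t : Finset β) :
    ∑ i, #((s i).toRight ∩ t) = #t :=
  sum_card_inter_of_partition
    (fun _ _ hij => disjoint_left.2 fun _ hb hb' =>
      disjoint_left.1 (hdisj hij) (mem_toRight.1 hb) (mem_toRight.1 hb'))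
    (fun b => (hcover (.inr b)).imp fun _ => mem_toRight.2) t

end Partition

section SumType

variable {ι α β : Type*}

theorem card_toLeft_eq_card_filter_isLeft (u : Finset (α ⊕ β)) :
    #u.toLeft = #{v ∈ u | v.isLeft} := by
  rw [← card_map Function.Embedding.inl]
  congr 1
  ext (a | b) <;> simp

theorem card_toRight_eq_card_filter_isRight (u : Finset (α ⊕ β)) :
    #u.toRight = #{v ∈ u | v.isRight} := by
  rw [← card_map Function.Embedding.inr]
  congr 1
  ext (a | b) <;> simp

variable [DecidableEq α] [DecidableEq β]

theorem card_toLeft_image {f : ι → α ⊕ β} (hf : Function.Injective f) (s : Finset ι) :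
    #(s.image f).toLeft = #{i ∈ s | (f i).isLeft} := by
  rw [card_toLeft_eq_card_filter_isLeft, filter_image, card_image_of_injective _ hf]

theorem card_toRight_image {f : ι → α ⊕ β} (hf : Function.Injective f) (s : Finset ι) :
    #(s.image f).toRight = #{i ∈ s | (f i).isRight} := by
  rw [card_toRight_eq_card_filter_isRight, filter_image, card_image_of_injective _ hf]

end SumType

section ColourGraph

variable {α β : Type} {r : ℕ}

theorem colourGraph.isLeft_eq_isRight_of_adj {χ : α → β → Fin r} {c : Fin r} {u v : α ⊕ β}
    (h : (colourGraph χ c).Adj u v) : u.isLeft = v.isRight := by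
  obtain ⟨a, b, -, ⟨rfl, rfl⟩ | ⟨rfl, rfl⟩⟩ := h <;> rfl

/-- The blow-up of the proper colouring `(i, j) ↦ i + j` of `K_{r,r}` in which the vertices
`i` of the two sides are replaced by the fibres `p⁻¹ i` and `q⁻¹ i`. -/
def blowUpColouring (p : α → Fin r) (q : β → Fin r) : α → β → Fin r := fun a b => p a + q b

theorem blowUpColouring_elim_eq_of_adj [NeZero r] {p : α → Fin r} {q : β → Fin r} {c : Fin r}
    {u v : α ⊕ β} (h : (colourGraph (blowUpColouring p q) c).Adj u v) :
    u.elim p (c - q ·) = v.elim p (c - q ·) := by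
  obtain ⟨a, b, hab, ⟨rfl, rfl⟩ | ⟨rfl, rfl⟩⟩ := h
  · exact eq_sub_of_add_eq hab
  · exact (eq_sub_of_add_eq hab).symm

end ColourGraph

namespace MonoCycle

open Function

section

variable {n r : ℕ} {χ : Fin n → Fin n → Fin r} (C : MonoCycle n r χ)

instance : NeZero C.len := ⟨C.pos.ne'⟩

def verts : Finset (Fin n ⊕ Fin n) := univ.image C.f

theorem mem_verts {v : Fin n ⊕ Fin n} : v ∈ C.verts ↔ v ∈ Set.range C.f := by
  simp [verts]

theorem card_verts_le_one (hlen : C.len < 2) : #C.verts ≤ 1 := by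
  have := C.pos
  calc #C.verts ≤ #(univ : Finset (ZMod C.len)) := card_image_le
    _ = C.len := by rw [card_univ, ZMod.card]
    _ ≤ 1 := by omega

theorem pairwise_disjoint_verts {k : ℕ} {C : Fin k → MonoCycle n r χ}
    (hdisj : ∀ i j, i ≠ j → Disjoint (Set.range (C i).f) (Set.range (C j).f)) :
    Pairwise (Disjoint on fun i => (C i).verts) := fun i j hij =>
  disjoint_left.2 fun _ hi hj =>
    Set.disjoint_left.1 (hdisj i j hij) ((C i).mem_verts.1 hi) ((C j).mem_verts.1 hj)

theorem exists_mem_verts {k : ℕ} {C : Fin k → MonoCycle n r χ}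
    (hcover : (⋃ i, Set.range (C i).f) = Set.univ) (v : Fin n ⊕ Fin n) :
    ∃ i, v ∈ (C i).verts := by
  simp only [mem_verts]
  exact Set.mem_iUnion.1 (hcover ▸ Set.mem_univ v)

theorem apply_eq_apply_zero_of_adj {X : Type*} (hlen : 2 ≤ C.len) (g : Fin n ⊕ Fin n → X)
    (hg : ∀ u v, (colourGraph χ C.colour).Adj u v → g u = g v) (i : ZMod C.len) :
    g (C.f i) = g (C.f 0) := by
  have key : ∀ m : ℕ, g (C.f m) = g (C.f 0) := by
    intro m
    induction m with
    | zero => simp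
    | succ m ih => rw [Nat.cast_succ, ← hg _ _ (C.adj hlen m), ih]
  simpa using key i.val

theorem card_toLeft_verts_eq_card_toRight (hlen : 2 ≤ C.len) :
    #C.verts.toLeft = #C.verts.toRight := by
  -- consecutive vertices lie on opposite sides, so `i ↦ i + 1` maps left positions to right ones
  rw [verts, card_toLeft_image C.inj, card_toRight_image C.inj, card_filter, card_filter]
  calc ∑ i, (if (C.f i).isLeft then 1 else 0)
      = ∑ i, if (C.f (i + 1)).isRight then 1 else 0 := by
        simp only [colourGraph.isLeft_eq_isRight_of_adj (C.adj hlen _)]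
    _ = ∑ i, if (C.f i).isRight then 1 else 0 :=
        Equiv.sum_comp (Equiv.addRight 1) fun i => if (C.f i).isRight then 1 else 0

end

section BlowUp

variable {n r : ℕ} [NeZero r] {p q : Fin n → Fin r} (C : MonoCycle n r (blowUpColouring p q))

theorem exists_fibres (hlen : 2 ≤ C.len) :
    ∃ A, (∀ x ∈ C.verts.toLeft, p x = A) ∧ ∀ y ∈ C.verts.toRight, q y = C.colour - A := by
  have hconst := C.apply_eq_apply_zero_of_adj hlen _ fun _ _ => blowUpColouring_elim_eq_of_adj
  refine ⟨(C.f 0).elim p (C.colour - q ·), fun x hx => ?_, fun y hy => ?_⟩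
  · obtain ⟨i, hi⟩ := C.mem_verts.1 (mem_toLeft.1 hx)
    simpa [hi] using hconst i
  · obtain ⟨i, hi⟩ := C.mem_verts.1 (mem_toRight.1 hy)
    have := hconst i
    simp only [hi, Sum.elim_inr] at this
    rw [← this, sub_sub_cancel]

theorem card_toLeft_le_one_or {s : ℕ} (hp : ∀ A, #{x | p x = A} ≤ s)
    (hq : ∀ B ≠ 0, #{y | q y = B} ≤ 1) :
    #C.verts.toLeft ≤ 1 ∨
      #C.verts.toLeft = #(C.verts.toRight ∩ ({y | q y = 0} : Finset (Fin n))) ∧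
        #C.verts.toLeft ≤ s := by
  rcases lt_or_ge C.len 2 with hlen | hlen
  · exact Or.inl (card_toLeft_le.trans (C.card_verts_le_one hlen))
  obtain ⟨A, hA, hB⟩ := C.exists_fibres hlen
  have hleft : #C.verts.toLeft ≤ s :=
    (card_le_card fun x hx => by simp [hA x hx]).trans (hp A)
  rw [C.card_toLeft_verts_eq_card_toRight hlen] at hleft ⊢
  by_cases h0 : C.colour - A = 0
  · refine Or.inr ⟨congrArg card (inter_eq_left.2 fun y hy => ?_).symm, hleft⟩
    simp [hB y hy, h0]
  · exact Or.inl ((card_le_card fun y hy => by simp [hB y hy]).trans (hq _ h0))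

end BlowUp

end MonoCycle

section Construction

/-- The right side of `K_{r·r, r·r}` split into the class `0 = {0, …, r² - r}` of size
`r(r - 1) + 1` and the singletons `{r² - r + j}`, `0 < j < r` (by truncated subtraction). -/
def rightClass (r : ℕ) (y : Fin (r * r)) : Fin r :=
  ⟨y - (r * r - r), by
    have := y.isLt; have := Nat.le_mul_self r; have := Nat.pos_of_mul_pos_left y.pos; omega⟩

variable {r : ℕ} [NeZero r]

theorem rightClass_eq_zero_iff {y : Fin (r * r)} :
    rightClass r y = 0 ↔ (y : ℕ) < r * r - r + 1 := by
  rw [Fin.ext_iff]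
  simp only [rightClass, Fin.val_zero]
  omega

theorem card_filter_rightClass_eq_zero : #{y | rightClass r y = 0} = r * r - r + 1 := by
  have := Nat.le_mul_self r
  have := NeZero.pos r
  simp only [rightClass_eq_zero_iff, Fin.card_filter_val_lt]
  exact min_eq_right (by omega)

theorem card_filter_rightClass_le_one {B : Fin r} (hB : B ≠ 0) :
    #{y | rightClass r y = B} ≤ 1 := by
  refine card_le_one.2 fun y hy y' hy' => ?_
  rw [mem_filter] at hy hy'
  have h : ¬(y : ℕ) < r * r - r + 1 := rightClass_eq_zero_iff.not.1 (hy.2 ▸ hB)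
  have h' : ¬(y' : ℕ) < r * r - r + 1 := rightClass_eq_zero_iff.not.1 (hy'.2 ▸ hB)
  have hval := congrArg Fin.val (hy.2.trans hy'.2.symm)
  simp only [rightClass] at hval
  exact Fin.ext (by omega)

omit [NeZero r] in
theorem card_filter_divNat_eq_le {m : ℕ} (A : Fin m) :
    #{x : Fin (m * r) | x.divNat = A} ≤ r := by
  calc #{x : Fin (m * r) | x.divNat = A} ≤ #((univ : Finset (Fin r)).image (Fin.mkDivMod A)) :=
        card_le_card fun x hx => mem_image.2
          ⟨x.modNat, mem_univ _, by rw [← (mem_filter.1 hx).2, Fin.divNat_mkDivMod_modNat]⟩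
    _ ≤ r := card_image_le.trans (card_univ.trans (Fintype.card_fin r)).le

end Construction

theorem mul_le_add_pred_mul_of_le_one_or {s l b : ℕ} (h : l ≤ 1 ∨ l = b ∧ l ≤ s) :
    s * l ≤ s + (s - 1) * b := by
  rcases h with h | ⟨rfl, h⟩
  · nlinarith
  · obtain _ | s := s
    · simp
    · rw [Nat.add_sub_cancel, add_mul, one_mul, add_comm]
      exact Nat.add_le_add_right h _

theorem two_mul_sub_one_le_of_mul_le {r k : ℕ} (hr : 2 ≤ r)
    (h : r * (r * r) ≤ r * k + (r - 1) * (r * r - r + 1)) : 2 * r - 1 ≤ k := by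
  obtain ⟨s, rfl⟩ : ∃ s, r = s + 1 := ⟨r - 1, by omega⟩
  rw [Nat.add_sub_cancel,
    Nat.sub_eq_of_eq_add (by ring : (s + 1) * (s + 1) = s * (s + 1) + (s + 1))] at h
  by_contra! hk
  have : (s + 1) * k ≤ (s + 1) * (2 * s) := Nat.mul_le_mul_left _ (by omega)
  nlinarith

/-- Lower bound construction: for every `r ≥ 2` there is an `r`-edge-colouring
of `K_{r·r, r·r}` which cannot be partitioned into fewer than `2r - 1`
vertex-disjoint monochromatic cycles. -/
theorem lower_bound_construction (r : ℕ) (hr : 2 ≤ r) :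
    ∃ χ : Fin (r * r) → Fin (r * r) → Fin r,
      ∀ (k : ℕ) (C : Fin k → MonoCycle (r * r) r χ),
        (∀ i j, i ≠ j → Disjoint (Set.range (C i).f) (Set.range (C j).f)) →
        (⋃ i, Set.range (C i).f) = Set.univ →
        2 * r - 1 ≤ k := by
  have : NeZero r := ⟨by omega⟩
  refine ⟨blowUpColouring Fin.divNat (rightClass r), fun k C hdisj hcover => ?_⟩
  have hdisj' := MonoCycle.pairwise_disjoint_verts hdisj
  have hcover' := MonoCycle.exists_mem_verts hcover
  have hleft : ∑ i, #(C i).verts.toLeft = r * r := by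
    simpa using sum_card_toLeft_inter_of_partition hdisj' hcover' univ
  have hblob :
      ∑ i, #((C i).verts.toRight ∩ ({y | rightClass r y = 0} : Finset _)) = r * r - r + 1 := by
    rw [sum_card_toRight_inter_of_partition hdisj' hcover', card_filter_rightClass_eq_zero]
  have hweight := sum_le_sum fun i (_ : i ∈ univ) => mul_le_add_pred_mul_of_le_one_or
    ((C i).card_toLeft_le_one_or card_filter_divNat_eq_le fun _ => card_filter_rightClass_le_one)
  rw [← mul_sum, hleft, sum_add_distrib, ← mul_sum, hblob, sum_const, card_univ,
    Fintype.card_fin, smul_eq_mul] at hweight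
  exact two_mul_sub_one_le_of_mul_le hr (by linarith)
end

section
/- Let H be a bipartite graph of (1−ε)-complete degree whose edges are 3-coloured, and suppose each colour has a non-trivial monochromatic component covering one full bipart pattern as in the final configuration of the key lemma proof: the top bipart of H is partitioned into three sets X̂, Ŷ, Ẑ and the bottom bipart into six sets Â,B̂,Ĉ,D̂,Ê,F̂ such that all edges between any top set and any bottom set carry a single colour according to the Latin-square pattern (X̂ sees Â,B̂ in red, Ĉ,Ê in blue, D̂,F̂ in green; Ŷ sees Ĉ,D̂ in red, Â,F̂ in blue, B̂,Ê in green; Ẑ sees Ê,F̂ in red, B̂,D̂ in blue, Â,Ĉ in green). If |X̂| ≤ |Â| + |B̂| then H can be covered by five vertex-disjoint monochromatic connected matchings. -/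
/-!
`X̂` is matched in red into `Â ∪ B̂`, which `|X̂| ≤ |Â| + |B̂|` allows. The colour classes of `Ŷ`
(`ĈD̂` red, `ÂF̂` blue, `B̂Ê` green) and of `Ẑ` (`ÊF̂` red, `B̂D̂` blue, `ÂĈ` green) are the
alternate sides of the hexagon `Ĉ D̂ B̂ Ê F̂ Â`, and four sides covering all six corners are
either a perfect matching of the hexagon plus one side (six choices) or two paths of length two
(three choices). For any sizes of the remaining bottom blocks one of these nine leaves room to
split them between `Ŷ` and `Ẑ`, which gives a transport plan from top to bottom blocks using
five (top block, colour) classes.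

Such a plan is realised by a bijection `σ` from top to bottom vertices, and the pairs `(i, σ i)`
of one class form a connected matching: every top vertex of the class sees every bottom vertex of
the class in its colour.
-/

open SimpleGraph

/-- The Latin-square colouring pattern: rows correspond to the top blocks
`X̂, Ŷ, Ẑ`, columns to the bottom blocks `Â, B̂, Ĉ, D̂, Ê, F̂`; colour `0` is
red, `1` is blue, `2` is green. -/
def pattern : Fin 3 → Fin 6 → Fin 3 :=
  ![![0, 0, 1, 2, 1, 2],
    ![1, 2, 0, 0, 2, 1],
    ![2, 1, 2, 1, 0, 0]]

open Finset

namespace CMatching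

variable {n r : ℕ} {χ : Fin n → Fin n → Fin r}

def ofMonoBlock (σ : Fin n ≃ Fin n) (S : Finset (Fin n)) (c : Fin r)
    (h : ∀ i ∈ S, ∀ i' ∈ S, χ i' (σ i) = c) : CMatching n r χ where
  colour := c
  pairs := S.image fun i => (i, σ i)
  mono := by
    simp only [mem_image]
    rintro _ ⟨i, hi, rfl⟩
    exact h i hi i hi
  inj1 := by
    simp only [mem_image]
    rintro _ ⟨i, -, rfl⟩ _ ⟨i', -, rfl⟩ (rfl : i = i')
    rfl
  inj2 := by
    simp only [mem_image]
    rintro _ ⟨i, -, rfl⟩ _ ⟨i', -, rfl⟩ hσ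
    rw [σ.injective hσ]
  conn := by
    simp only [mem_image]
    rintro _ ⟨i, hi, rfl⟩ _ ⟨i', hi', rfl⟩
    have h₁ : (colourGraph χ c).Adj (Sum.inl i) (Sum.inr (σ i)) :=
      ⟨i, σ i, h i hi i hi, .inl ⟨rfl, rfl⟩⟩
    have h₂ : (colourGraph χ c).Adj (Sum.inr (σ i)) (Sum.inl i') :=
      ⟨i', σ i, h i hi i' hi', .inr ⟨rfl, rfl⟩⟩
    exact h₁.reachable.trans h₂.reachable
  single := none
  hsingle := .inl rfl

theorem mem_verts_ofMonoBlock {σ : Fin n ≃ Fin n} {S : Finset (Fin n)} {c : Fin r}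
    {h : ∀ i ∈ S, ∀ i' ∈ S, χ i' (σ i) = c} {x : Fin n ⊕ Fin n} :
    x ∈ (ofMonoBlock σ S c h).verts ↔ Sum.elim id σ.symm x ∈ S := by
  cases x <;> simp [verts, ofMonoBlock, ← Equiv.symm_apply_eq]

end CMatching

theorem fiveMatchingPartition_of_labelling {n r : ℕ} {χ : Fin n → Fin n → Fin r}
    (σ : Fin n ≃ Fin n) (μ : Fin n → Fin 5) (c : Fin 5 → Fin r)
    (h : ∀ i i', μ i = μ i' → χ i' (σ i) = c (μ i)) : FiveMatchingPartition χ := by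
  let M s := CMatching.ofMonoBlock σ {i | μ i = s} (c s) (by
    simp only [mem_filter, mem_univ, true_and]
    rintro i rfl i' hi'
    exact h i i' hi'.symm)
  have hM : ∀ s x, x ∈ (M s).verts ↔ μ (Sum.elim id σ.symm x) = s := by
    simp [M, CMatching.mem_verts_ofMonoBlock]
  refine ⟨M, fun s s' hne => Set.disjoint_left.2 fun x hx hx' => ?_, ?_⟩
  · exact hne (((hM s x).1 hx).symm.trans ((hM s' x).1 hx'))
  · exact Set.eq_univ_of_forall fun x => Set.mem_iUnion.2 ⟨_, (hM _ x).2 rfl⟩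

theorem exists_equiv_apply_eq_of_card_fiber_eq {ι κ μ : Type*} [Fintype ι] [Fintype κ]
    [DecidableEq μ] {f : ι → μ} {g : κ → μ} (h : ∀ c, #{i | f i = c} = #{k | g k = c}) :
    ∃ e : ι ≃ κ, ∀ i, g (e i) = f i := by
  classical
  refine ⟨.ofFiberEquiv fun c => Fintype.equivOfCardEq ?_, Equiv.ofFiberEquiv_map _⟩
  simpa [Fintype.card_subtype] using h c

theorem card_filter_sigma_fst {α β : Type*} [Fintype α] [Fintype β] [DecidableEq α]
    (m : α → β → ℕ) (a : α) : #{x : Σ a, Σ b, Fin (m a b) | x.1 = a} = ∑ b, m a b := by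
  rw [card_filter]
  simp only [Fintype.sum_sigma]
  simp [apply_ite card]

theorem card_filter_sigma_snd {α β : Type*} [Fintype α] [Fintype β] [DecidableEq β]
    (m : α → β → ℕ) (b : β) : #{x : Σ a, Σ b, Fin (m a b) | x.2.1 = b} = ∑ a, m a b := by
  rw [card_filter]
  simp only [Fintype.sum_sigma]
  simp [apply_ite card]

theorem exists_equiv_forall_ne_zero {ι α β : Type*} [Fintype ι] [Fintype α] [Fintype β]
    [DecidableEq α] [DecidableEq β] (t : ι → α) (u : ι → β) (m : α → β → ℕ)
    (hrow : ∀ a, ∑ b, m a b = #{i | t i = a}) (hcol : ∀ b, ∑ a, m a b = #{i | u i = b}) :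
    ∃ σ : ι ≃ ι, ∀ i, m (t i) (u (σ i)) ≠ 0 := by
  obtain ⟨e₁, he₁⟩ := exists_equiv_apply_eq_of_card_fiber_eq
    (f := t) (g := fun x : Σ a, Σ b, Fin (m a b) => x.1)
    fun a => by rw [card_filter_sigma_fst, hrow]
  obtain ⟨e₂, he₂⟩ := exists_equiv_apply_eq_of_card_fiber_eq
    (f := u) (g := fun x : Σ a, Σ b, Fin (m a b) => x.2.1)
    fun b => by rw [card_filter_sigma_snd, hcol]
  refine ⟨e₁.trans e₂.symm, fun i => ?_⟩
  have hu : u (e₂.symm (e₁ i)) = (e₁ i).2.1 := by rw [← he₂, Equiv.apply_symm_apply]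
  rw [Equiv.trans_apply, hu, ← he₁]
  exact (e₁ i).2.2.pos.ne'

/-- Each class `(a, P a b)` met by the support of `m` will carry one connected matching. -/
def IsPatternPlan {α β γ : Type*} [Fintype α] [Fintype β] (P : α → β → γ) (k : ℕ)
    (rs : α → ℕ) (cs : β → ℕ) (m : α → β → ℕ) : Prop :=
  (∀ a, ∑ b, m a b = rs a) ∧ (∀ b, ∑ a, m a b = cs b) ∧
    ∃ U : Finset (α × γ), #U ≤ k ∧ ∀ a b, m a b ≠ 0 → (a, P a b) ∈ U

theorem IsPatternPlan.add {α β γ : Type*} [Fintype α] [Fintype β] [DecidableEq α]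
    [DecidableEq γ] {P : α → β → γ} {k k' : ℕ} {rs rs' : α → ℕ} {cs cs' : β → ℕ}
    {m m' : α → β → ℕ} (h : IsPatternPlan P k rs cs m) (h' : IsPatternPlan P k' rs' cs' m') :
    IsPatternPlan P (k + k') (rs + rs') (cs + cs') (m + m') := by
  obtain ⟨hrow, hcol, U, hU, hsupp⟩ := h
  obtain ⟨hrow', hcol', U', hU', hsupp'⟩ := h'
  refine ⟨fun a => ?_, fun b => ?_, U ∪ U', (card_union_le U U').trans (add_le_add hU hU'),
    fun a b hab => ?_⟩
  · simp [sum_add_distrib, hrow, hrow']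
  · simp [sum_add_distrib, hcol, hcol']
  · by_cases ha : m a b = 0
    · exact mem_union_right U (hsupp' a b (by simpa [ha] using hab))
    · exact mem_union_left U' (hsupp a b ha)

theorem fiveMatchingPartition_of_isPatternPlan {n k : ℕ} [NeZero k] {α β : Type*} [Fintype α]
    [Fintype β] [DecidableEq α] [DecidableEq β] {χ : Fin n → Fin n → Fin k}
    (P : α → β → Fin k) (t : Fin n → α) (u : Fin n → β) (hχ : ∀ i j, χ i j = P (t i) (u j))
    {m : α → β → ℕ}
    (hm : IsPatternPlan P 5 (fun a => #{i | t i = a}) (fun b => #{i | u i = b}) m) :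
    FiveMatchingPartition χ := by
  obtain ⟨hrow, hcol, U, hU, hsupp⟩ := hm
  obtain ⟨σ, hσ⟩ := exists_equiv_forall_ne_zero t u m hrow hcol
  obtain ⟨e⟩ : Nonempty (U ↪ Fin 5) := Function.Embedding.nonempty_of_card_le (by simpa using hU)
  let cls (i : Fin n) : U := ⟨(t i, P (t i) (u (σ i))), hsupp _ _ (hσ i)⟩
  refine fiveMatchingPartition_of_labelling σ (e ∘ cls) (Function.extend e (·.1.2) 0)
    fun i i' hii' => ?_
  have htt : t i' = t i := congrArg (·.1.1) (e.injective hii').symm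
  rw [Function.comp_apply, e.injective.extend_apply, hχ, htt]

theorem exists_add_eq_of_le_add {u p q : ℕ} (h : u ≤ p + q) :
    ∃ p' q', p' ≤ p ∧ q' ≤ q ∧ p' + q' = u :=
  ⟨min u p, u - min u p, min_le_right u p, by omega, by omega⟩

theorem exists_isPatternPlan_YZ_of_one_class {a b c d e f y z : ℕ}
    (h : y + z = a + b + c + d + e + f)
    (hyz : y ≤ c + d ∨ y ≤ b + e ∨ y ≤ a + f ∨ z ≤ e + f ∨ z ≤ b + d ∨ z ≤ a + c) :
    ∃ m, IsPatternPlan pattern 4 ![0, y, z] ![a, b, c, d, e, f] m := by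
  rcases hyz with hy | hy | hy | hz | hz | hz
  · obtain ⟨c', d', hc, hd, rfl⟩ := exists_add_eq_of_le_add hy
    refine ⟨![0, ![0, 0, c', d', 0, 0], ![a, b, c - c', d - d', e, f]], ?_, ?_,
      {(1, 0), (2, 0), (2, 1), (2, 2)}, by decide, ?_⟩ <;>
    simp [Fin.forall_fin_succ, Fin.sum_univ_succ, pattern] <;> omega
  · obtain ⟨b', e', hb, he, rfl⟩ := exists_add_eq_of_le_add hy
    refine ⟨![0, ![0, b', 0, 0, e', 0], ![a, b - b', c, d, e - e', f]], ?_, ?_,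
      {(1, 2), (2, 0), (2, 1), (2, 2)}, by decide, ?_⟩ <;>
    simp [Fin.forall_fin_succ, Fin.sum_univ_succ, pattern] <;> omega
  · obtain ⟨a', f', ha, hf, rfl⟩ := exists_add_eq_of_le_add hy
    refine ⟨![0, ![a', 0, 0, 0, 0, f'], ![a - a', b, c, d, e, f - f']], ?_, ?_,
      {(1, 1), (2, 0), (2, 1), (2, 2)}, by decide, ?_⟩ <;>
    simp [Fin.forall_fin_succ, Fin.sum_univ_succ, pattern] <;> omega
  · obtain ⟨e', f', he, hf, rfl⟩ := exists_add_eq_of_le_add hz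
    refine ⟨![0, ![a, b, c, d, e - e', f - f'], ![0, 0, 0, 0, e', f']], ?_, ?_,
      {(1, 0), (1, 1), (1, 2), (2, 0)}, by decide, ?_⟩ <;>
    simp [Fin.forall_fin_succ, Fin.sum_univ_succ, pattern] <;> omega
  · obtain ⟨b', d', hb, hd, rfl⟩ := exists_add_eq_of_le_add hz
    refine ⟨![0, ![a, b - b', c, d - d', e, f], ![0, b', 0, d', 0, 0]], ?_, ?_,
      {(1, 0), (1, 1), (1, 2), (2, 1)}, by decide, ?_⟩ <;>
    simp [Fin.forall_fin_succ, Fin.sum_univ_succ, pattern] <;> omega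
  · obtain ⟨a', c', ha, hc, rfl⟩ := exists_add_eq_of_le_add hz
    refine ⟨![0, ![a - a', b, c - c', d, e, f], ![a', 0, c', 0, 0, 0]], ?_, ?_,
      {(1, 0), (1, 1), (1, 2), (2, 2)}, by decide, ?_⟩ <;>
    simp [Fin.forall_fin_succ, Fin.sum_univ_succ, pattern] <;> omega

theorem exists_isPatternPlan_YZ_of_two_classes {a b c d e f y z : ℕ}
    (h : y + z = a + b + c + d + e + f)
    (hy : (e + f ≤ y ∧ y - (e + f) ≤ a + b) ∨ (b + d ≤ y ∧ y - (b + d) ≤ c + e) ∨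
      (a + c ≤ y ∧ y - (a + c) ≤ d + f)) :
    ∃ m, IsPatternPlan pattern 4 ![0, y, z] ![a, b, c, d, e, f] m := by
  rcases hy with ⟨hy₀, hy⟩ | ⟨hy₀, hy⟩ | ⟨hy₀, hy⟩
  · obtain ⟨a', b', ha, hb, hab⟩ := exists_add_eq_of_le_add hy
    refine ⟨![0, ![a', b', 0, 0, e, f], ![a - a', b - b', c, d, 0, 0]], ?_, ?_,
      {(1, 1), (1, 2), (2, 1), (2, 2)}, by decide, ?_⟩ <;>
    simp [Fin.forall_fin_succ, Fin.sum_univ_succ, pattern] <;> omega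
  · obtain ⟨c', e', hc, he, hce⟩ := exists_add_eq_of_le_add hy
    refine ⟨![0, ![0, b, c', d, e', 0], ![a, 0, c - c', 0, e - e', f]], ?_, ?_,
      {(1, 0), (1, 2), (2, 0), (2, 2)}, by decide, ?_⟩ <;>
    simp [Fin.forall_fin_succ, Fin.sum_univ_succ, pattern] <;> omega
  · obtain ⟨d', f', hd, hf, hdf⟩ := exists_add_eq_of_le_add hy
    refine ⟨![0, ![a, 0, c, d', 0, f'], ![0, b, 0, d - d', e, f - f']], ?_, ?_,
      {(1, 0), (1, 1), (2, 0), (2, 1)}, by decide, ?_⟩ <;>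
    simp [Fin.forall_fin_succ, Fin.sum_univ_succ, pattern] <;> omega

theorem exists_isPatternPlan_YZ (a b c d e f y z : ℕ) (h : y + z = a + b + c + d + e + f) :
    ∃ m, IsPatternPlan pattern 4 ![0, y, z] ![a, b, c, d, e, f] m := by
  by_cases hyz : y ≤ c + d ∨ y ≤ b + e ∨ y ≤ a + f ∨ z ≤ e + f ∨ z ≤ b + d ∨ z ≤ a + c
  · exact exists_isPatternPlan_YZ_of_one_class h hyz
  · exact exists_isPatternPlan_YZ_of_two_classes h (by omega)

theorem exists_isPatternPlan_X {x a b : ℕ} (h : x ≤ a + b) :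
    ∃ a' b' m, a' ≤ a ∧ b' ≤ b ∧ a' + b' = x ∧
      IsPatternPlan pattern 1 ![x, 0, 0] ![a', b', 0, 0, 0, 0] m := by
  obtain ⟨a', b', ha, hb, rfl⟩ := exists_add_eq_of_le_add h
  refine ⟨a', b', ![![a', b', 0, 0, 0, 0], 0, 0], ha, hb, rfl, ?_, ?_, {(0, 0)}, le_rfl, ?_⟩ <;>
  simp [Fin.forall_fin_succ, Fin.sum_univ_succ, pattern]

theorem exists_isPatternPlan {rs : Fin 3 → ℕ} {cs : Fin 6 → ℕ} (hsum : ∑ r, rs r = ∑ j, cs j)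
    (hX : rs 0 ≤ cs 0 + cs 1) : ∃ m, IsPatternPlan pattern 5 rs cs m := by
  obtain ⟨a', b', mX, ha, hb, hab, hmX⟩ := exists_isPatternPlan_X hX
  obtain ⟨mYZ, hmYZ⟩ := exists_isPatternPlan_YZ (cs 0 - a') (cs 1 - b') (cs 2) (cs 3) (cs 4)
    (cs 5) (rs 1) (rs 2) (by simp only [Fin.sum_univ_three, Fin.sum_univ_six] at hsum; omega)
  refine ⟨mX + mYZ, ?_⟩
  convert hmX.add hmYZ using 1 <;> ext i <;> fin_cases i <;> simp <;> omega

/-- If a 3-edge-colouring of `K_{n,n}` follows the Latin-square block pattern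
(top blocks `X̂, Ŷ, Ẑ` given by `t`, bottom blocks `Â, …, F̂` given by `bf`)
and `|X̂| ≤ |Â| + |B̂|`, then the vertex set can be covered by five
vertex-disjoint monochromatic connected matchings. -/
theorem pattern_colouring_five_matchings_of_small_X
    {n : ℕ} (t : Fin n → Fin 3) (bf : Fin n → Fin 6)
    (χ : Fin n → Fin n → Fin 3)
    (hχ : ∀ a b, χ a b = pattern (t a) (bf b))
    (hX : {a : Fin n | t a = 0}.ncard ≤
      {b : Fin n | bf b = 0}.ncard + {b : Fin n | bf b = 1}.ncard) :
    FiveMatchingPartition χ := by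
  have hncard {k : ℕ} (g : Fin n → Fin k) (c : Fin k) : {i | g i = c}.ncard = #{i | g i = c} := by
    rw [← Set.ncard_coe_finset, coe_filter_univ]
  have hsum {k : ℕ} (g : Fin n → Fin k) : ∑ c, #{i | g i = c} = n := by
    rw [← card_eq_sum_card_fiberwise fun i _ => mem_univ (g i), card_univ, Fintype.card_fin]
  obtain ⟨m, hm⟩ := exists_isPatternPlan (rs := fun c => #{i | t i = c})
    (cs := fun c => #{i | bf i = c}) (by rw [hsum, hsum]) (by simpa only [hncard] using hX)
  exact fiveMatchingPartition_of_isPatternPlan pattern t bf hχ hm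
end
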